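/- arXiv:1907.04841 — 10 statements merged into one kernel-verified Lean document; each statement's English description precedes it below -/
import Mathlib

section
/- For a stochastic matrix P ∈ ℝ^{n×n}, the 1-norm ergodicity coefficient τ₁(P) = max_{x: ‖x‖₁=1, 𝟙ᵀx=0} ‖Px‖₁ satisfies τ₁(P) = 1 − min_{j,k} ∑ᵢ min{P_{ij}, P_{ik}}. -/
open Finset Filter Topology

noncomputable section

/-- The probability simplex in `ℝⁿ`. -/
def S1 (n : ℕ) : Set (Fin n → ℝ) := {x | (∀ i, 0 ≤ x i) ∧ ∑ i, x i = 1}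

/-- Zero-sum vectors of ℓ¹ norm one. -/
def Z1 (n : ℕ) : Set (Fin n → ℝ) := {y | ∑ i, y i = 0 ∧ ∑ i, |y i| = 1}

/-- Tensor-vector-vector product `(Pxy)_i = ∑_{j,k} P_{ijk} x_j y_k`. -/
def tvv {n : ℕ} (P : Fin n → Fin n → Fin n → ℝ) (x y : Fin n → ℝ) : Fin n → ℝ :=
  fun i => ∑ j, ∑ k, P i j k * x j * y k

/-- A (column) stochastic third-order tensor. -/
def Stochastic {n : ℕ} (P : Fin n → Fin n → Fin n → ℝ) : Prop :=
  (∀ i j k, 0 ≤ P i j k) ∧ ∀ j k, ∑ i, P i j k = 1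

/-- A column stochastic matrix. -/
def StochasticM {n : ℕ} (P : Fin n → Fin n → ℝ) : Prop :=
  (∀ i j, 0 ≤ P i j) ∧ ∀ j, ∑ i, P i j = 1

/-- Higher-order ergodicity coefficient `T_L`. -/
def TL {n : ℕ} (P : Fin n → Fin n → Fin n → ℝ) : ℝ :=
  sSup {r | ∃ x ∈ S1 n, ∃ y ∈ Z1 n, r = ∑ i, |tvv P x y i|}

/-- Higher-order ergodicity coefficient `T_R`. -/
def TR {n : ℕ} (P : Fin n → Fin n → Fin n → ℝ) : ℝ :=
  sSup {r | ∃ x ∈ S1 n, ∃ y ∈ Z1 n, r = ∑ i, |tvv P y x i|}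

/-- Higher-order ergodicity coefficient `T`. -/
def TT {n : ℕ} (P : Fin n → Fin n → Fin n → ℝ) : ℝ :=
  sSup {r | ∃ x ∈ S1 n, ∃ y ∈ Z1 n, r = ∑ i, |tvv P x y i + tvv P y x i|}

/-- Tensor 1-norm `‖P‖₁ = max_{j,k} ∑_i |P_{ijk}|`. -/
def tnorm {n : ℕ} (P : Fin n → Fin n → Fin n → ℝ) : ℝ :=
  ⨆ j, ⨆ k, ∑ i, |P i j k|

/-- 1-norm ergodicity coefficient of a matrix. -/
def tau1 {n : ℕ} (P : Fin n → Fin n → ℝ) : ℝ :=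
  sSup {r | ∃ y ∈ Z1 n, r = ∑ i, |∑ j, P i j * y j|}

lemma habs {n : ℕ} (P : Fin n → Fin n → ℝ) (hP : StochasticM P) (j k : Fin n) :
    ∑ i, |P i j - P i k| = 2 - 2 * ∑ i, min (P i j) (P i k) := by
  have h : ∀ i, |P i j - P i k| = P i j + P i k - 2 * min (P i j) (P i k) := by
    intro i
    rcases le_total (P i j) (P i k) with h | h
    · rw [abs_of_nonpos (by linarith), min_eq_left h]; ring
    · rw [abs_of_nonneg (by linarith), min_eq_right h]; ring
  simp only [h, Finset.sum_sub_distrib, Finset.sum_add_distrib, ← Finset.mul_sum, hP.2]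
  ring

lemma cle {n : ℕ} (m : Fin n → Fin n → ℝ) (j k : Fin n) :
    ⨅ j, ⨅ k, m j k ≤ m j k :=
  le_trans (ciInf_le (Finite.bddBelow_range _) j) (ciInf_le (Finite.bddBelow_range _) k)

lemma upper {n : ℕ} (P : Fin n → Fin n → ℝ) (hP : StochasticM P) (y : Fin n → ℝ)
    (hy : y ∈ Z1 n) :
    ∑ i, |∑ j, P i j * y j| ≤ 1 - ⨅ j, ⨅ k, ∑ i, min (P i j) (P i k) := by
  obtain ⟨hy0, hy1⟩ := hy
  set m : Fin n → Fin n → ℝ := fun j k => ∑ i, min (P i j) (P i k) with hm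
  set c : ℝ := ⨅ j, ⨅ k, m j k with hc
  set a : Fin n → ℝ := fun j => max (y j) 0 with hadef
  set b : Fin n → ℝ := fun j => max (-y j) 0 with hbdef
  have hay : ∀ j, a j - b j = y j := by
    intro j
    rcases le_total 0 (y j) with h | h
    · simp [hadef, hbdef, max_eq_left h, max_eq_right (neg_nonpos.mpr h)]
    · simp [hadef, hbdef, max_eq_right h, max_eq_left (neg_nonneg.mpr h)]
  have haabs : ∀ j, a j + b j = |y j| := fun j => max_zero_add_max_neg_zero_eq_abs_self _
  have ha0 : ∀ j, 0 ≤ a j := fun j => le_max_right _ _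
  have hb0 : ∀ j, 0 ≤ b j := fun j => le_max_right _ _
  have hsum1 : ∑ j, a j + ∑ j, b j = 1 := by
    rw [← Finset.sum_add_distrib]; simp only [haabs]; exact hy1
  have hsum0 : ∑ j, a j - ∑ j, b j = 0 := by
    rw [← Finset.sum_sub_distrib]; simp only [hay]; exact hy0
  have hsa : ∑ j, a j = 1/2 := by linarith
  have hsb : ∑ j, b j = 1/2 := by linarith
  have key : ∀ i, ∑ j, P i j * y j = 2 * ∑ j, ∑ k, a j * b k * (P i j - P i k) := by
    intro i
    have t1 : ∑ j, ∑ k, a j * b k * P i j = (∑ j, a j * P i j) * (1/2) := by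
      rw [Finset.sum_mul]
      refine Finset.sum_congr rfl fun j _ => ?_
      rw [← hsb, Finset.mul_sum]
      exact Finset.sum_congr rfl fun k _ => by ring
    have t2 : ∑ j, ∑ k, a j * b k * P i k = (∑ k, b k * P i k) * (1/2) := by
      rw [Finset.sum_comm, Finset.sum_mul]
      refine Finset.sum_congr rfl fun k _ => ?_
      rw [← hsa, Finset.mul_sum]
      exact Finset.sum_congr rfl fun j _ => by ring
    have lhs : ∑ j, P i j * y j = ∑ j, a j * P i j - ∑ j, b j * P i j := by
      rw [← Finset.sum_sub_distrib]
      exact Finset.sum_congr rfl fun j _ => by rw [← hay j]; ring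
    rw [lhs]
    simp only [mul_sub, Finset.sum_sub_distrib]
    rw [t1, t2]; ring
  calc ∑ i, |∑ j, P i j * y j|
      ≤ ∑ i, 2 * ∑ j, ∑ k, a j * b k * |P i j - P i k| := by
        refine Finset.sum_le_sum fun i _ => ?_
        rw [key i, abs_mul, abs_of_nonneg (by norm_num : (0:ℝ) ≤ 2)]
        gcongr
        calc |∑ j, ∑ k, a j * b k * (P i j - P i k)|
            ≤ ∑ j, |∑ k, a j * b k * (P i j - P i k)| := Finset.abs_sum_le_sum_abs _ _
          _ ≤ ∑ j, ∑ k, a j * b k * |P i j - P i k| := by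
              refine Finset.sum_le_sum fun j _ => ?_
              calc |∑ k, a j * b k * (P i j - P i k)| ≤ ∑ k, |a j * b k * (P i j - P i k)| :=
                    Finset.abs_sum_le_sum_abs _ _
                _ = ∑ k, a j * b k * |P i j - P i k| := by
                    refine Finset.sum_congr rfl fun k _ => ?_
                    rw [abs_mul, abs_mul, abs_of_nonneg (ha0 j), abs_of_nonneg (hb0 k)]
    _ = 2 * ∑ j, ∑ k, a j * b k * (2 - 2 * m j k) := by
        rw [← Finset.mul_sum]
        congr 1
        rw [Finset.sum_comm]
        refine Finset.sum_congr rfl fun j _ => ?_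
        rw [Finset.sum_comm]
        refine Finset.sum_congr rfl fun k _ => ?_
        rw [← Finset.mul_sum, habs P hP j k]
    _ ≤ 2 * ∑ j, ∑ k, a j * b k * (2 - 2 * c) := by
        have h1 : ∑ j, ∑ k, a j * b k * (2 - 2 * m j k) ≤ ∑ j, ∑ k, a j * b k * (2 - 2 * c) := by
          refine Finset.sum_le_sum fun j _ => Finset.sum_le_sum fun k _ => ?_
          have hcm : c ≤ m j k := cle m j k
          nlinarith [mul_nonneg (ha0 j) (hb0 k)]
        linarith
    _ = 1 - c := by
        have h2 : ∑ j, ∑ k, a j * b k * (2 - 2 * c) = ((1:ℝ)/2) * (1/2) * (2 - 2*c) := by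
          calc ∑ j, ∑ k, a j * b k * (2 - 2*c)
              = ∑ j, (a j * (1/2)) * (2 - 2*c) := by
                refine Finset.sum_congr rfl fun j _ => ?_
                rw [← hsb, Finset.mul_sum, Finset.sum_mul]
            _ = ((1:ℝ)/2) * (1/2) * (2 - 2*c) := by
                rw [← Finset.sum_mul, ← Finset.sum_mul]
                rw [hsa]
        rw [h2]; ring

theorem stmt1 {n : ℕ} (hn : 0 < n) (P : Fin n → Fin n → ℝ) (hP : StochasticM P) :
    tau1 P = 1 - ⨅ j, ⨅ k, ∑ i, min (P i j) (P i k) := by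
  have : Nonempty (Fin n) := ⟨⟨0, hn⟩⟩
  set m : Fin n → Fin n → ℝ := fun j k => ∑ i, min (P i j) (P i k) with hm
  set c : ℝ := ⨅ j, ⨅ k, m j k with hc
  set S : Set ℝ := {r | ∃ y ∈ Z1 n, r = ∑ i, |∑ j, P i j * y j|} with hS
  have hub : ∀ r ∈ S, r ≤ 1 - c := by
    rintro r ⟨y, hy, rfl⟩; exact upper P hP y hy
  have hbdd : BddAbove S := ⟨1 - c, hub⟩
  have hmdiag : ∀ j : Fin n, m j j = 1 := by
    intro j; simp only [hm, min_self]; exact hP.2 j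
  have hc1 : c ≤ 1 := by
    have := cle m ⟨0, hn⟩ ⟨0, hn⟩
    rw [hmdiag] at this; exact this
  rw [show tau1 P = sSup S from rfl]
  apply le_antisymm
  · rcases Set.eq_empty_or_nonempty S with h | h
    · rw [h, Real.sSup_empty]; linarith
    · exact csSup_le h hub
  · obtain ⟨⟨j0, k0⟩, hmin⟩ := Finite.exists_min (fun p : Fin n × Fin n => m p.1 p.2)
    have hceq : c = m j0 k0 :=
      le_antisymm (cle m j0 k0) (le_ciInf fun j => le_ciInf fun k => hmin (j, k))
    by_cases hjk : j0 = k0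
    · have h1 : m j0 k0 = 1 := by rw [hjk, hmdiag]
      rw [hceq, h1, sub_self]
      apply Real.sSup_nonneg
      rintro r ⟨y, hy, rfl⟩
      positivity
    · set y : Fin n → ℝ :=
        fun l => (if l = j0 then (1:ℝ) else 0) / 2 - (if l = k0 then (1:ℝ) else 0) / 2 with hy
      have hyZ : y ∈ Z1 n := by
        constructor
        · simp [hy, Finset.sum_sub_distrib, ← Finset.sum_div, Finset.sum_ite_eq']
        · have habs' : ∀ l, |y l| =
              (if l = j0 then (1:ℝ) else 0) / 2 + (if l = k0 then (1:ℝ) else 0) / 2 := by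
            intro l
            have hjk' : ¬ k0 = j0 := fun h => hjk h.symm
            by_cases h1 : l = j0 <;> by_cases h2 : l = k0
            · exact absurd (h1 ▸ h2) hjk
            · simp [hy, h1, h2, hjk, hjk']
            · simp [hy, h1, h2, hjk, hjk']
            · simp [hy, h1, h2]
          simp [habs', Finset.sum_add_distrib, ← Finset.sum_div, Finset.sum_ite_eq']
          norm_num
      have hrow : ∀ i, ∑ j, P i j * y j = P i j0 / 2 - P i k0 / 2 := by
        intro i
        simp [hy, mul_sub, Finset.sum_sub_distrib, ← mul_div_assoc, mul_ite, mul_one, mul_zero,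
          ← Finset.sum_div, Finset.sum_ite_eq']
      have hval : ∑ i, |∑ j, P i j * y j| = 1 - m j0 k0 := by
        have e : ∀ i, |∑ j, P i j * y j| = |P i j0 - P i k0| / 2 := by
          intro i; rw [hrow i, div_sub_div_same, abs_div]; norm_num
        simp only [e, ← Finset.sum_div, habs P hP j0 k0]
        rw [hm]; ring
      have hin : 1 - c ∈ S := ⟨y, hyZ, by rw [hval, hceq]⟩
      exact le_csSup hbdd hin
end
end

section
/- For any matrix P ∈ ℝ^{n×n}, the 1-norm ergodicity coefficient τ₁(P) = max_{x: ‖x‖₁=1, 𝟙ᵀx=0} ‖Px‖₁ equals (1/2) max_{j,k} ∑ᵢ |P_{ij} − P_{ik}|. -/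
open Finset Filter Topology

noncomputable section

lemma leM {n : ℕ} (P : Fin n → Fin n → ℝ) (j k : Fin n) :
    ∑ i, |P i j - P i k| ≤ ⨆ j, ⨆ k, ∑ i, |P i j - P i k| :=
  calc ∑ i, |P i j - P i k| ≤ ⨆ k, ∑ i, |P i j - P i k| :=
        le_ciSup (f := fun k => ∑ i, |P i j - P i k|) (Set.Finite.bddAbove (Set.finite_range _)) k
    _ ≤ _ := le_ciSup (f := fun j => ⨆ k, ∑ i, |P i j - P i k|) (Set.Finite.bddAbove (Set.finite_range _)) j


-- key upper bound lemma
lemma key {n : ℕ} (P : Fin n → Fin n → ℝ) (y : Fin n → ℝ)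
    (h0 : ∑ i, y i = 0) (h1 : ∑ i, |y i| = 1) :
    ∑ i, |∑ j, P i j * y j| ≤ (1/2) * ⨆ j, ⨆ k, ∑ i, |P i j - P i k| := by
  have hn : n ≠ 0 := by rintro rfl; simp at h1
  haveI : NeZero n := ⟨hn⟩
  set M : ℝ := ⨆ j, ⨆ k, ∑ i, |P i j - P i k| with hM
  have hle : ∀ j k, ∑ i, |P i j - P i k| ≤ M := fun j k => leM P j k
  set yp : Fin n → ℝ := fun i => max (y i) 0 with hyp
  set ym : Fin n → ℝ := fun i => max (-y i) 0 with hym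
  have hyd : ∀ i, y i = yp i - ym i := by
    intro i
    rcases le_total 0 (y i) with h | h
    · simp [hyp, hym, max_eq_left h, max_eq_right (neg_nonpos.mpr h)]
    · simp [hyp, hym, max_eq_right h, max_eq_left (neg_nonneg.mpr h)]
  have hya : ∀ i, |y i| = yp i + ym i := by
    intro i
    rcases le_total 0 (y i) with h | h
    · rw [abs_of_nonneg h]
      simp [hyp, hym, max_eq_left h, max_eq_right (neg_nonpos.mpr h)]
    · rw [abs_of_nonpos h]
      simp [hyp, hym, max_eq_right h, max_eq_left (neg_nonneg.mpr h)]
  have hppos : ∀ i, 0 ≤ yp i := fun i => le_max_right _ _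
  have hmpos : ∀ i, 0 ≤ ym i := fun i => le_max_right _ _
  have hsp : ∑ i, yp i = 1/2 := by
    have e0 : ∑ i, (yp i - ym i) = 0 := by rw [← h0]; exact Finset.sum_congr rfl fun i _ => (hyd i).symm
    have e1 : ∑ i, (yp i + ym i) = 1 := by rw [← h1]; exact Finset.sum_congr rfl fun i _ => (hya i).symm
    rw [Finset.sum_sub_distrib] at e0; rw [Finset.sum_add_distrib] at e1; linarith
  have hsm : ∑ i, ym i = 1/2 := by
    have e0 : ∑ i, (yp i - ym i) = 0 := by rw [← h0]; exact Finset.sum_congr rfl fun i _ => (hyd i).symm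
    have e1 : ∑ i, (yp i + ym i) = 1 := by rw [← h1]; exact Finset.sum_congr rfl fun i _ => (hya i).symm
    rw [Finset.sum_sub_distrib] at e0; rw [Finset.sum_add_distrib] at e1; linarith
  have hid : ∀ i, ∑ j, P i j * y j = ∑ j, ∑ k, 2 * (P i j - P i k) * yp j * ym k := by
    intro i
    have : ∑ j, ∑ k, 2 * (P i j - P i k) * yp j * ym k
        = (∑ j, 2 * P i j * yp j) * (∑ k, ym k) - (∑ j, yp j) * (∑ k, 2 * P i k * ym k) := by
      rw [Finset.sum_mul_sum, Finset.sum_mul_sum, ← Finset.sum_sub_distrib]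
      refine Finset.sum_congr rfl fun j _ => ?_
      rw [← Finset.sum_sub_distrib]
      exact Finset.sum_congr rfl fun k _ => by ring
    rw [this, hsp, hsm, Finset.sum_mul, Finset.mul_sum, ← Finset.sum_sub_distrib]
    exact Finset.sum_congr rfl fun j _ => by rw [hyd j]; ring
  calc ∑ i, |∑ j, P i j * y j|
      ≤ ∑ i, ∑ j, ∑ k, 2 * |P i j - P i k| * yp j * ym k := by
        refine Finset.sum_le_sum fun i _ => ?_
        rw [hid i]
        refine (Finset.abs_sum_le_sum_abs _ _).trans (Finset.sum_le_sum fun j _ => ?_)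
        refine (Finset.abs_sum_le_sum_abs _ _).trans (Finset.sum_le_sum fun k _ => ?_)
        rw [abs_mul, abs_mul, abs_of_nonneg (hppos j), abs_of_nonneg (hmpos k), abs_mul]
        simp [abs_of_nonneg]
    _ = ∑ j, ∑ k, 2 * yp j * ym k * ∑ i, |P i j - P i k| := by
        rw [Finset.sum_comm]
        refine Finset.sum_congr rfl fun j _ => ?_
        rw [Finset.sum_comm]
        refine Finset.sum_congr rfl fun k _ => ?_
        rw [Finset.mul_sum]
        exact Finset.sum_congr rfl fun i _ => by ring
    _ ≤ ∑ j, ∑ k, 2 * yp j * ym k * M := by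
        refine Finset.sum_le_sum fun j _ => Finset.sum_le_sum fun k _ => ?_
        exact mul_le_mul_of_nonneg_left (hle j k) (by positivity)
    _ = (1/2) * M := by
        have h2 : ∀ j, ∑ k, 2 * yp j * ym k * M = yp j * M := by
          intro j
          have : ∑ k, 2 * yp j * ym k * M = (∑ k, ym k) * (2 * yp j * M) := by
            rw [Finset.sum_mul]; exact Finset.sum_congr rfl fun k _ => by ring
          rw [this, hsm]; ring
        rw [Finset.sum_congr rfl fun j _ => h2 j, ← Finset.sum_mul, hsp]

lemma memS {n : ℕ} (P : Fin n → Fin n → ℝ) {j k : Fin n} (hjk : j ≠ k) :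
    (1/2) * ∑ i, |P i j - P i k| ∈ {r | ∃ y ∈ Z1 n, r = ∑ i, |∑ j, P i j * y j|} := by
  refine ⟨fun i => (if i = j then (1:ℝ) else 0)/2 - (if i = k then 1 else 0)/2, ⟨?_, ?_⟩, ?_⟩
  · rw [Finset.sum_sub_distrib, ← Finset.sum_div, ← Finset.sum_div,
      Finset.sum_ite_eq' Finset.univ j (fun _ => (1:ℝ)),
      Finset.sum_ite_eq' Finset.univ k (fun _ => (1:ℝ))]
    simp
  · have habs : ∀ i, |(if i = j then (1:ℝ) else 0)/2 - (if i = k then 1 else 0)/2|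
        = (if i = j then (1:ℝ) else 0)/2 + (if i = k then 1 else 0)/2 := by
      intro i
      by_cases hij : i = j <;> by_cases hik : i = k <;> simp_all
    rw [Finset.sum_congr rfl fun i _ => habs i, Finset.sum_add_distrib,
      ← Finset.sum_div, ← Finset.sum_div,
      Finset.sum_ite_eq' Finset.univ j (fun _ => (1:ℝ)),
      Finset.sum_ite_eq' Finset.univ k (fun _ => (1:ℝ))]
    norm_num
  · have hval : ∀ i, ∑ m, P i m * ((if m = j then (1:ℝ) else 0)/2 - (if m = k then 1 else 0)/2)
        = (P i j - P i k)/2 := by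
      intro i
      have h1 : ∀ m, P i m * ((if m = j then (1:ℝ) else 0)/2 - (if m = k then 1 else 0)/2)
          = (if m = j then P i m else 0)/2 - (if m = k then P i m else 0)/2 := by
        intro m
        by_cases hm : m = j <;> by_cases hm' : m = k <;> simp_all <;> ring
      rw [Finset.sum_congr rfl fun m _ => h1 m, Finset.sum_sub_distrib,
        ← Finset.sum_div, ← Finset.sum_div,
        Finset.sum_ite_eq' Finset.univ j (fun m => P i m),
        Finset.sum_ite_eq' Finset.univ k (fun m => P i m)]
      simp
      ring
    rw [Finset.sum_congr rfl fun i _ => congrArg abs (hval i), Finset.mul_sum]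
    refine Finset.sum_congr rfl fun i _ => ?_
    rw [abs_div, abs_of_nonneg (by norm_num : (0:ℝ) ≤ 2)]
    ring

theorem stmt2 {n : ℕ} (hn : 0 < n) (P : Fin n → Fin n → ℝ) :
    tau1 P = (1 / 2) * ⨆ j, ⨆ k, ∑ i, |P i j - P i k| := by
  rw [tau1]
  haveI : NeZero n := ⟨hn.ne'⟩
  haveI : Nonempty (Fin n) := Fin.pos_iff_nonempty.mp hn
  set M : ℝ := ⨆ j, ⨆ k, ∑ i, |P i j - P i k| with hM
  set S : Set ℝ := {r | ∃ y ∈ Z1 n, r = ∑ i, |∑ j, P i j * y j|} with hS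
  have hub : ∀ r ∈ S, r ≤ (1/2) * M := by
    rintro r ⟨y, ⟨h0, h1⟩, rfl⟩; exact key P y h0 h1
  have hM0 : 0 ≤ M := by
    have := leM P (0 : Fin n) 0
    simpa using this
  rcases eq_or_lt_of_le (Nat.one_le_iff_ne_zero.mpr hn.ne') with h1 | h2
  · -- n = 1
    obtain rfl : n = 1 := h1.symm
    have hSe : S = ∅ := by
      ext r
      simp only [hS, Set.mem_setOf_eq, Set.mem_empty_iff_false, iff_false]
      rintro ⟨y, ⟨h0, h1⟩, -⟩
      rw [Fin.sum_univ_one] at h0 h1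
      rw [h0] at h1
      simp at h1
    have hMe : M = 0 := by
      rw [hM]
      rw [ciSup_unique, ciSup_unique]
      simp
    rw [hSe, Real.sSup_empty, hMe, mul_zero]
  · -- 2 ≤ n
    have h01 : (⟨0, hn⟩ : Fin n) ≠ ⟨1, h2⟩ := by simp
    have hne : S.Nonempty := ⟨_, memS P h01⟩
    have hbdd : BddAbove S := ⟨(1/2) * M, hub⟩
    have hS0 : 0 ≤ sSup S := by
      refine le_trans ?_ (le_csSup hbdd (memS P h01))
      positivity
    refine le_antisymm (Real.sSup_le hub (by linarith)) ?_
    have : M ≤ 2 * sSup S := by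
      refine ciSup_le fun j => ciSup_le fun k => ?_
      by_cases hjk : j = k
      · subst hjk; simp; linarith
      · have := le_csSup hbdd (memS P hjk)
        linarith
    linarith
end
end

section
/- For a third-order tensor P ∈ ℝ^{n×n×n}, the higher-order ergodicity coefficient T_L(P) = max_{x∈S₁} max_{y∈Z₁} ‖Pxy‖₁ equals (1/2) max_{j,k₁,k₂} ∑ᵢ |P_{ijk₁} − P_{ijk₂}|. -/
open Finset Filter Topology

noncomputable section

lemma aux_bound {n : ℕ} (P : Fin n → Fin n → Fin n → ℝ) (M : ℝ)
    (hM : ∀ j k₁ k₂, ∑ i, |P i j k₁ - P i j k₂| ≤ M)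
    {x y : Fin n → ℝ} (hx : x ∈ S1 n) (hy : y ∈ Z1 n) :
    ∑ i, |tvv P x y i| ≤ M / 2 := by
  obtain ⟨hx0, hx1⟩ := hx
  obtain ⟨hy0, hy1⟩ := hy
  set yp : Fin n → ℝ := fun k => max (y k) 0 with hyp_def
  set ym : Fin n → ℝ := fun k => max (-(y k)) 0 with hym_def
  have hyp0 : ∀ k, 0 ≤ yp k := fun k => le_max_right _ _
  have hym0 : ∀ k, 0 ≤ ym k := fun k => le_max_right _ _
  have hd : ∀ k, y k = yp k - ym k := by
    intro k
    rcases le_total 0 (y k) with h | h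
    · simp [hyp_def, hym_def, max_eq_left h, max_eq_right (neg_nonpos.2 h)]
    · simp [hyp_def, hym_def, max_eq_right h, max_eq_left (neg_nonneg.2 h)]
  have habs : ∀ k, |y k| = yp k + ym k := by
    intro k
    rcases le_total 0 (y k) with h | h
    · rw [abs_of_nonneg h]
      simp [hyp_def, hym_def, max_eq_left h, max_eq_right (neg_nonpos.2 h)]
    · rw [abs_of_nonpos h]
      simp [hyp_def, hym_def, max_eq_right h, max_eq_left (neg_nonneg.2 h)]
  have hs1 : ∑ k, yp k - ∑ k, ym k = 0 := by
    rw [← Finset.sum_sub_distrib]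
    rw [← hy0]
    exact Finset.sum_congr rfl fun k _ => (hd k).symm
  have hs2 : ∑ k, yp k + ∑ k, ym k = 1 := by
    rw [← Finset.sum_add_distrib, ← hy1]
    exact Finset.sum_congr rfl fun k _ => (habs k).symm
  have hsp : ∑ k, yp k = 1 / 2 := by linarith
  have hsm : ∑ k, ym k = 1 / 2 := by linarith
  set v : Fin n → Fin n → ℝ := fun i k => ∑ j, P i j k * x j with hv_def
  -- key identity
  have key : ∀ i, tvv P x y i = ∑ k₁, ∑ k₂, (2 * yp k₁ * ym k₂) * (v i k₁ - v i k₂) := by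
    intro i
    have h1 : tvv P x y i = ∑ k, y k * v i k := by
      unfold tvv
      rw [Finset.sum_comm]
      refine Finset.sum_congr rfl fun k _ => ?_
      rw [← Finset.sum_mul, mul_comm]
    have h2 : ∑ k₁, ∑ k₂, (2 * yp k₁ * ym k₂) * (v i k₁ - v i k₂)
        = (∑ k₁, 2 * yp k₁ * v i k₁) * (∑ k₂, ym k₂)
          - (∑ k₁, 2 * yp k₁) * (∑ k₂, ym k₂ * v i k₂) := by
      rw [Finset.sum_mul_sum, Finset.sum_mul_sum, ← Finset.sum_sub_distrib]
      refine Finset.sum_congr rfl fun k₁ _ => ?_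
      rw [← Finset.sum_sub_distrib]
      exact Finset.sum_congr rfl fun k₂ _ => by ring
    have h3 : ∑ k₁, 2 * yp k₁ = 2 * (1/2 : ℝ) := by
      rw [← Finset.mul_sum, hsp]
    have h4 : ∑ k₁, 2 * yp k₁ * v i k₁ = 2 * ∑ k, yp k * v i k := by
      rw [Finset.mul_sum]
      exact Finset.sum_congr rfl fun k _ => by ring
    have h5 : ∑ k, y k * v i k = ∑ k, yp k * v i k - ∑ k, ym k * v i k := by
      rw [← Finset.sum_sub_distrib]
      exact Finset.sum_congr rfl fun k _ => by rw [hd k]; ring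
    rw [h1, h2, hsm, h3, h4, h5]
    ring
  -- bound on ∑ i |v i k₁ - v i k₂|
  have hvM : ∀ k₁ k₂, ∑ i, |v i k₁ - v i k₂| ≤ M := by
    intro k₁ k₂
    have step1 : ∀ i, |v i k₁ - v i k₂| ≤ ∑ j, |P i j k₁ - P i j k₂| * x j := by
      intro i
      have : v i k₁ - v i k₂ = ∑ j, (P i j k₁ - P i j k₂) * x j := by
        rw [← Finset.sum_sub_distrib]
        exact Finset.sum_congr rfl fun j _ => by ring
      rw [this]
      refine (Finset.abs_sum_le_sum_abs _ _).trans ?_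
      refine Finset.sum_le_sum fun j _ => ?_
      rw [abs_mul, abs_of_nonneg (hx0 j)]
    calc ∑ i, |v i k₁ - v i k₂| ≤ ∑ i, ∑ j, |P i j k₁ - P i j k₂| * x j :=
          Finset.sum_le_sum fun i _ => step1 i
      _ = ∑ j, (∑ i, |P i j k₁ - P i j k₂|) * x j := by
          rw [Finset.sum_comm]
          exact Finset.sum_congr rfl fun j _ => by rw [Finset.sum_mul]
      _ ≤ ∑ j, M * x j := Finset.sum_le_sum fun j _ =>
          mul_le_mul_of_nonneg_right (hM j k₁ k₂) (hx0 j)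
      _ = M := by rw [← Finset.mul_sum, hx1, mul_one]
  calc ∑ i, |tvv P x y i|
      ≤ ∑ i, ∑ k₁, ∑ k₂, (2 * yp k₁ * ym k₂) * |v i k₁ - v i k₂| := by
        refine Finset.sum_le_sum fun i _ => ?_
        rw [key i]
        refine (Finset.abs_sum_le_sum_abs _ _).trans ?_
        refine Finset.sum_le_sum fun k₁ _ => ?_
        refine (Finset.abs_sum_le_sum_abs _ _).trans ?_
        refine Finset.sum_le_sum fun k₂ _ => ?_
        rw [abs_mul, abs_of_nonneg (by positivity : (0:ℝ) ≤ 2 * yp k₁ * ym k₂)]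
    _ = ∑ k₁, ∑ k₂, (2 * yp k₁ * ym k₂) * ∑ i, |v i k₁ - v i k₂| := by
        rw [Finset.sum_comm]
        refine Finset.sum_congr rfl fun k₁ _ => ?_
        rw [Finset.sum_comm]
        exact Finset.sum_congr rfl fun k₂ _ => by rw [Finset.mul_sum]
    _ ≤ ∑ k₁, ∑ k₂, (2 * yp k₁ * ym k₂) * M := by
        refine Finset.sum_le_sum fun k₁ _ => Finset.sum_le_sum fun k₂ _ => ?_
        exact mul_le_mul_of_nonneg_left (hvM k₁ k₂) (by positivity)
    _ = M / 2 := by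
        have e1 : ∀ k₁, ∑ k₂, (2 * yp k₁ * ym k₂) * M = 2 * yp k₁ * (1/2) * M := by
          intro k₁
          have : ∑ k₂, (2 * yp k₁ * ym k₂) * M = (2 * yp k₁) * (∑ k₂, ym k₂) * M := by
            rw [Finset.mul_sum, Finset.sum_mul]
          rw [this, hsm]
        simp only [e1]
        have e2 : ∑ k₁, 2 * yp k₁ * (1/2) * M = (∑ k₁, yp k₁) * M := by
          rw [Finset.sum_mul]
          exact Finset.sum_congr rfl fun k _ => by ring
        rw [e2, hsp]
        ring

theorem stmt4 {n : ℕ} (hn : 0 < n) (P : Fin n → Fin n → Fin n → ℝ) :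
    TL P = (1 / 2) * ⨆ j, ⨆ k₁, ⨆ k₂, ∑ i, |P i j k₁ - P i j k₂| := by
  haveI : Nonempty (Fin n) := ⟨⟨0, hn⟩⟩
  set f : Fin n → Fin n → Fin n → ℝ := fun j k₁ k₂ => ∑ i, |P i j k₁ - P i j k₂| with hf_def
  set M : ℝ := ⨆ j, ⨆ k₁, ⨆ k₂, f j k₁ k₂ with hM_def
  have hfM : ∀ j k₁ k₂, f j k₁ k₂ ≤ M := by
    intro j k₁ k₂
    have h1 : f j k₁ k₂ ≤ ⨆ k₂', f j k₁ k₂' :=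
      le_ciSup (Set.Finite.bddAbove (Set.finite_range _)) k₂
    have h2 : (⨆ k₂', f j k₁ k₂') ≤ ⨆ k₁', ⨆ k₂', f j k₁' k₂' :=
      le_ciSup (Set.Finite.bddAbove (Set.finite_range (fun k₁' => ⨆ k₂', f j k₁' k₂'))) k₁
    have h3 : (⨆ k₁', ⨆ k₂', f j k₁' k₂') ≤ M :=
      le_ciSup (Set.Finite.bddAbove (Set.finite_range (fun j' => ⨆ k₁', ⨆ k₂', f j' k₁' k₂'))) j
    exact h1.trans (h2.trans h3)
  obtain ⟨⟨j, k₁, k₂⟩, hmax⟩ :=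
    Finite.exists_max (fun t : Fin n × Fin n × Fin n => f t.1 t.2.1 t.2.2)
  have hMeq : M = f j k₁ k₂ := by
    refine le_antisymm ?_ (hfM j k₁ k₂)
    exact ciSup_le fun j' => ciSup_le fun k₁' => ciSup_le fun k₂' => hmax ⟨j', k₁', k₂'⟩
  have hM0 : 0 ≤ M := by
    refine le_trans ?_ (hfM j k₁ k₁)
    simp [hf_def]
  have hub : ∀ r ∈ {r | ∃ x ∈ S1 n, ∃ y ∈ Z1 n, r = ∑ i, |tvv P x y i|}, r ≤ M / 2 := by
    rintro r ⟨x, hx, y, hy, rfl⟩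
    exact aux_bound P M hfM hx hy
  have hTLle : TL P ≤ M / 2 := Real.sSup_le hub (by linarith)
  have hTL0 : 0 ≤ TL P := by
    refine Real.sSup_nonneg ?_
    rintro r ⟨x, hx, y, hy, rfl⟩
    positivity
  rw [show (1 / 2) * M = M / 2 by ring]
  by_cases hk : k₁ = k₂
  · have hMz : M = 0 := by
      refine le_antisymm ?_ hM0
      rw [hMeq, hk]
      simp [hf_def]
    rw [hMz]
    linarith [hTLle, hTL0, hMz]
  · -- construct witness achieving M / 2
    set x : Fin n → ℝ := fun j' => if j' = j then 1 else 0 with hx_def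
    set y : Fin n → ℝ := fun k =>
      (if k = k₁ then (1:ℝ)/2 else 0) - (if k = k₂ then (1:ℝ)/2 else 0) with hy_def
    have hxS : x ∈ S1 n := by
      constructor
      · intro i; by_cases h : i = j <;> simp [hx_def, h]
      · simp [hx_def, Finset.sum_ite_eq']
    have hyZ : y ∈ Z1 n := by
      constructor
      · simp [hy_def, Finset.sum_sub_distrib, Finset.sum_ite_eq']
      · have : ∀ k, |y k| = (if k = k₁ then (1:ℝ)/2 else 0) + (if k = k₂ then (1:ℝ)/2 else 0) := by
          intro k
          by_cases h1 : k = k₁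
          · subst h1
            simp only [hy_def, if_pos rfl, if_neg hk]
            norm_num
          · by_cases h2 : k = k₂
            · subst h2
              simp only [hy_def, if_neg h1, if_pos rfl]
              norm_num
            · simp [hy_def, h1, h2]
        rw [Finset.sum_congr rfl fun k _ => this k, Finset.sum_add_distrib]
        norm_num [Finset.sum_ite_eq']
    have htvv : ∀ i, tvv P x y i = (P i j k₁ - P i j k₂) / 2 := by
      intro i
      unfold tvv
      have hcol : ∀ k, ∑ j', P i j' k * x j' * y k = P i j k * y k := by
        intro k
        rw [show (fun j' => P i j' k * x j' * y k)
            = (fun j' => if j' = j then P i j' k * y k else 0) from funext fun j' => by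
          by_cases h : j' = j <;> simp [hx_def, h]]
        simp [Finset.sum_ite_eq']
      rw [Finset.sum_comm, Finset.sum_congr rfl fun k _ => hcol k]
      have : ∀ k, P i j k * y k
          = (if k = k₁ then P i j k * (1/2) else 0) - (if k = k₂ then P i j k * (1/2) else 0) := by
        intro k
        have hk' : ¬k₂ = k₁ := fun h => hk h.symm
        by_cases h1 : k = k₁ <;> by_cases h2 : k = k₂ <;>
          simp [hy_def, h1, h2, hk, hk']
      rw [Finset.sum_congr rfl fun k _ => this k, Finset.sum_sub_distrib]
      simp only [Finset.sum_ite_eq', Finset.mem_univ, if_pos]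
      ring
    have hval : ∑ i, |tvv P x y i| = M / 2 := by
      rw [Finset.sum_congr rfl fun i _ => by rw [htvv i, abs_div, abs_of_nonneg (by norm_num : (0:ℝ) ≤ 2)]]
      rw [← Finset.sum_div, hMeq]
    have hmem : M / 2 ∈ {r | ∃ x ∈ S1 n, ∃ y ∈ Z1 n, r = ∑ i, |tvv P x y i|} :=
      ⟨x, hxS, y, hyZ, hval.symm⟩
    have hbdd : BddAbove {r | ∃ x ∈ S1 n, ∃ y ∈ Z1 n, r = ∑ i, |tvv P x y i|} := ⟨M / 2, hub⟩
    exact le_antisymm hTLle (le_csSup hbdd hmem)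
end
end

section
/- For a stochastic third-order tensor P ∈ ℝ^{n×n×n}, T_L(P) = 1 − min_{j,k₁,k₂} ∑ᵢ min{P_{ijk₁}, P_{ijk₂}}. -/
open Finset Filter Topology

noncomputable section

lemma helper_abs_sub_sum {n : ℕ} (a b : Fin n → ℝ) (ha : ∑ i, a i = 1) (hb : ∑ i, b i = 1) :
    ∑ i, |a i - b i| = 2 - 2 * ∑ i, min (a i) (b i) := by
  have h : ∀ i, |a i - b i| = a i + b i - 2 * min (a i) (b i) := by
    intro i; rcases le_total (a i) (b i) with h | h
    · rw [abs_of_nonpos (by linarith), min_eq_left h]; ring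
    · rw [abs_of_nonneg (by linarith), min_eq_right h]; ring
  calc ∑ i, |a i - b i| = ∑ i, (a i + b i - 2 * min (a i) (b i)) :=
        Finset.sum_congr rfl fun i _ => h i
    _ = (∑ i, a i) + (∑ i, b i) - 2 * ∑ i, min (a i) (b i) := by
        rw [Finset.sum_sub_distrib, Finset.sum_add_distrib, Finset.mul_sum]
    _ = 2 - 2 * ∑ i, min (a i) (b i) := by rw [ha, hb]; ring

lemma helper_mat {n : ℕ} (M : Fin n → Fin n → ℝ) (hM0 : ∀ i k, 0 ≤ M i k)
    (hM1 : ∀ k, ∑ i, M i k = 1) (c : ℝ) (hc : ∀ k l, c ≤ ∑ i, min (M i k) (M i l))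
    (y : Fin n → ℝ) (hy0 : ∑ k, y k = 0) (hy1 : ∑ k, |y k| = 1) :
    ∑ i, |∑ k, M i k * y k| ≤ 1 - c := by
  set p : Fin n → ℝ := fun k => max (y k) 0 with hp
  set m : Fin n → ℝ := fun k => max (-y k) 0 with hm
  have hp0 : ∀ k, 0 ≤ p k := fun k => le_max_right _ _
  have hm0 : ∀ k, 0 ≤ m k := fun k => le_max_right _ _
  have hpm : ∀ k, p k - m k = y k := by
    intro k; rcases le_total (y k) 0 with h | h
    · simp [hp, hm, max_eq_right h, max_eq_left (neg_nonneg.2 h)]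
    · simp [hp, hm, max_eq_left h, max_eq_right (neg_nonpos.2 h)]
  have habs : ∀ k, p k + m k = |y k| := by
    intro k; rcases le_total (y k) 0 with h | h
    · rw [abs_of_nonpos h]; simp [hp, hm, max_eq_right h, max_eq_left (neg_nonneg.2 h)]
    · rw [abs_of_nonneg h]; simp [hp, hm, max_eq_left h, max_eq_right (neg_nonpos.2 h)]
  have hsub : (∑ k, p k) - (∑ k, m k) = 0 := by
    rw [← Finset.sum_sub_distrib]
    simpa [hpm] using hy0
  have hadd : (∑ k, p k) + (∑ k, m k) = 1 := by
    rw [← Finset.sum_add_distrib]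
    simpa [habs] using hy1
  have hps : ∑ k, p k = 1/2 := by linarith
  have hms : ∑ k, m k = 1/2 := by linarith
  have key : ∀ i, ∑ k, M i k * y k = 2 * ∑ k, ∑ l, p k * m l * (M i k - M i l) := by
    intro i
    have h1 : ∑ k, ∑ l, p k * m l * (M i k - M i l)
        = (∑ k, p k * M i k) * (∑ l, m l) - (∑ k, p k) * (∑ l, m l * M i l) := by
      rw [Finset.sum_mul, Finset.sum_mul, ← Finset.sum_sub_distrib]
      refine Finset.sum_congr rfl fun k _ => ?_
      rw [Finset.mul_sum, Finset.mul_sum, ← Finset.sum_sub_distrib]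
      refine Finset.sum_congr rfl fun l _ => ?_
      ring
    rw [h1, hms, hps]
    have h2 : ∑ k, M i k * y k = (∑ k, p k * M i k) - (∑ k, m k * M i k) := by
      rw [← Finset.sum_sub_distrib]
      refine Finset.sum_congr rfl fun k _ => ?_
      rw [← hpm k]; ring
    rw [h2]; ring
  calc ∑ i, |∑ k, M i k * y k|
      ≤ ∑ i, 2 * ∑ k, ∑ l, p k * m l * |M i k - M i l| := by
        refine Finset.sum_le_sum fun i _ => ?_
        rw [key i, abs_mul, abs_two]
        refine mul_le_mul_of_nonneg_left ?_ (by norm_num)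
        refine le_trans (Finset.abs_sum_le_sum_abs _ _) (Finset.sum_le_sum fun k _ => ?_)
        refine le_trans (Finset.abs_sum_le_sum_abs _ _) (Finset.sum_le_sum fun l _ => ?_)
        rw [abs_mul, abs_mul, abs_of_nonneg (hp0 k), abs_of_nonneg (hm0 l)]
    _ = 2 * ∑ k, ∑ l, p k * m l * ∑ i, |M i k - M i l| := by
        rw [← Finset.mul_sum, Finset.sum_comm]
        congr 1
        refine Finset.sum_congr rfl fun k _ => ?_
        rw [Finset.sum_comm]
        refine Finset.sum_congr rfl fun l _ => ?_
        rw [Finset.mul_sum]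
    _ = 2 * ∑ k, ∑ l, p k * m l * (2 - 2 * ∑ i, min (M i k) (M i l)) := by
        congr 1
        refine Finset.sum_congr rfl fun k _ => Finset.sum_congr rfl fun l _ => ?_
        rw [helper_abs_sub_sum _ _ (hM1 k) (hM1 l)]
    _ ≤ 2 * ∑ k, ∑ l, p k * m l * (2 - 2 * c) := by
        refine mul_le_mul_of_nonneg_left
          (Finset.sum_le_sum fun k _ => Finset.sum_le_sum fun l _ => ?_) (by norm_num)
        refine mul_le_mul_of_nonneg_left (by linarith [hc k l]) (mul_nonneg (hp0 k) (hm0 l))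
    _ = 1 - c := by
        have : ∑ k, ∑ l, p k * m l * (2 - 2 * c)
            = (∑ k, p k) * ((∑ l, m l) * (2 - 2 * c)) := by
          rw [Finset.sum_mul]
          refine Finset.sum_congr rfl fun k _ => ?_
          calc ∑ l, p k * m l * (2 - 2 * c) = ∑ l, p k * (m l * (2 - 2 * c)) :=
                Finset.sum_congr rfl fun l _ => by ring
            _ = p k * ∑ l, m l * (2 - 2 * c) := (Finset.mul_sum _ _ _).symm
            _ = p k * ((∑ l, m l) * (2 - 2 * c)) := by rw [Finset.sum_mul]
        rw [this, hps, hms]; ring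

theorem stmt5 {n : ℕ} (hn : 0 < n) (P : Fin n → Fin n → Fin n → ℝ) (hP : Stochastic P) :
    TL P = 1 - ⨅ j, ⨅ k₁, ⨅ k₂, ∑ i, min (P i j k₁) (P i j k₂) := by
  haveI : NeZero n := ⟨hn.ne'⟩
  obtain ⟨hP0, hP1⟩ := hP
  set f : Fin n → Fin n → Fin n → ℝ := fun j k₁ k₂ => ∑ i, min (P i j k₁) (P i j k₂) with hf
  set c : ℝ := ⨅ j, ⨅ k₁, ⨅ k₂, f j k₁ k₂ with hcdef
  have hfle1 : ∀ j k₁ k₂, f j k₁ k₂ ≤ 1 := by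
    intro j k₁ k₂
    calc f j k₁ k₂ ≤ ∑ i, P i j k₁ :=
          Finset.sum_le_sum fun i _ => min_le_left _ _
      _ = 1 := hP1 j k₁
  have hfdiag : ∀ j k, f j k k = 1 := by
    intro j k
    simp only [hf, min_self]
    exact hP1 j k
  have hcle : ∀ j k₁ k₂, c ≤ f j k₁ k₂ := by
    intro j k₁ k₂
    calc c ≤ ⨅ k₁, ⨅ k₂, f j k₁ k₂ := ciInf_le (Finite.bddBelow_range _) j
      _ ≤ ⨅ k₂, f j k₁ k₂ := ciInf_le (Finite.bddBelow_range _) k₁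
      _ ≤ f j k₁ k₂ := ciInf_le (Finite.bddBelow_range _) k₂
  -- upper bound for all elements of the TL set
  have hub : ∀ x ∈ S1 n, ∀ y ∈ Z1 n, ∑ i, |tvv P x y i| ≤ 1 - c := by
    rintro x ⟨hx0, hx1⟩ y ⟨hy0, hy1⟩
    have hcol : ∀ j, ∑ i, |∑ k, P i j k * y k| ≤ 1 - c := fun j =>
      helper_mat (fun i k => P i j k) (fun i k => hP0 i j k) (fun k => hP1 j k) c
        (fun k l => hcle j k l) y hy0 hy1
    calc ∑ i, |tvv P x y i|
        ≤ ∑ i, ∑ j, x j * |∑ k, P i j k * y k| := by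
          refine Finset.sum_le_sum fun i _ => ?_
          have : tvv P x y i = ∑ j, x j * ∑ k, P i j k * y k := by
            refine Finset.sum_congr rfl fun j _ => ?_
            rw [Finset.mul_sum]
            exact Finset.sum_congr rfl fun k _ => by ring
          rw [this]
          refine le_trans (Finset.abs_sum_le_sum_abs _ _)
            (Finset.sum_le_sum fun j _ => ?_)
          rw [abs_mul, abs_of_nonneg (hx0 j)]
      _ = ∑ j, x j * ∑ i, |∑ k, P i j k * y k| := by
          rw [Finset.sum_comm]
          exact Finset.sum_congr rfl fun j _ => (Finset.mul_sum _ _ _).symm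
      _ ≤ ∑ j, x j * (1 - c) :=
          Finset.sum_le_sum fun j _ => mul_le_mul_of_nonneg_left (hcol j) (hx0 j)
      _ = 1 - c := by rw [← Finset.sum_mul, hx1, one_mul]
  rcases lt_or_ge n 2 with h2 | h2
  · -- n = 1 case : Z1 is empty
    have hn1 : n = 1 := by omega
    have hZ : Z1 n = ∅ := by
      subst hn1
      ext y
      simp only [Z1, Set.mem_setOf_eq, Set.mem_empty_iff_false, iff_false, not_and]
      intro h0
      rw [Fin.sum_univ_one] at h0 ⊢
      rw [h0]; norm_num
    have hc1 : c = 1 := by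
      refine le_antisymm (le_trans (hcle 0 0 0) (hfle1 0 0 0)) ?_
      exact le_ciInf fun j => le_ciInf fun k₁ => le_ciInf fun k₂ => by
        subst hn1
        rw [Fin.fin_one_eq_zero k₁, Fin.fin_one_eq_zero k₂, hfdiag]
    have : {r | ∃ x ∈ S1 n, ∃ y ∈ Z1 n, r = ∑ i, |tvv P x y i|} = ∅ := by
      ext r
      simp only [Set.mem_setOf_eq, Set.mem_empty_iff_false, iff_false]
      rintro ⟨x, _, y, hy, _⟩
      rw [hZ] at hy; exact hy
    rw [TL, this, Real.sSup_empty, hc1]; norm_num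
  · -- n ≥ 2 : find a minimizer with distinct k's
    obtain ⟨⟨j₀, k₁, k₂⟩, hmin⟩ :=
      Finite.exists_min (fun t : Fin n × Fin n × Fin n => f t.1 t.2.1 t.2.2)
    have hcmin : c = f j₀ k₁ k₂ := by
      refine le_antisymm (hcle _ _ _) ?_
      exact le_ciInf fun j => le_ciInf fun a => le_ciInf fun b => hmin (j, a, b)
    -- get a minimizer with distinct indices
    obtain ⟨j', a, b, hab, hcab⟩ : ∃ j' a b, a ≠ b ∧ c = f j' a b := by
      by_cases hk : k₁ = k₂
      · have hc1 : c = 1 := by rw [hcmin, hk, hfdiag]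
        have h01 : (⟨0, by omega⟩ : Fin n) ≠ ⟨1, by omega⟩ := by
          intro h; simpa using congrArg Fin.val h
        refine ⟨j₀, _, _, h01, ?_⟩
        refine le_antisymm (hcle _ _ _) ?_
        rw [hc1]; exact hfle1 _ _ _
      · exact ⟨j₀, k₁, k₂, hk, hcmin⟩
    -- construct witnesses
    set x : Fin n → ℝ := fun j => if j = j' then 1 else 0 with hx
    set y : Fin n → ℝ := fun k =>
      (if k = a then (1:ℝ)/2 else 0) + (if k = b then -(1:ℝ)/2 else 0) with hy
    have hxS : x ∈ S1 n := by
      constructor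
      · intro j; simp only [hx]; split <;> norm_num
      · simp [hx, Finset.sum_ite_eq']
    have hyZ : y ∈ Z1 n := by
      constructor
      · simp only [hy, Finset.sum_add_distrib, Finset.sum_ite_eq', Finset.mem_univ,
          if_pos]
        norm_num
      · have : ∀ k, |y k| = (if k = a then (1:ℝ)/2 else 0) + (if k = b then (1:ℝ)/2 else 0) := by
          intro k
          by_cases ha1 : k = a
          · have hb1 : ¬ k = b := fun h => hab (ha1.symm.trans h)
            simp only [hy, if_pos ha1, if_neg hb1]
            norm_num
          · by_cases hb1 : k = b
            · simp only [hy, if_neg ha1, if_pos hb1]; norm_num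
            · simp only [hy, if_neg ha1, if_neg hb1]; norm_num
        rw [Finset.sum_congr rfl fun k _ => this k, Finset.sum_add_distrib]
        simp only [Finset.sum_ite_eq', Finset.mem_univ, if_pos]
        norm_num
    have htvv : ∀ i, tvv P x y i = (P i j' a - P i j' b) / 2 := by
      intro i
      have h1 : tvv P x y i = ∑ j, x j * ∑ k, P i j k * y k := by
        refine Finset.sum_congr rfl fun j _ => ?_
        rw [Finset.mul_sum]
        exact Finset.sum_congr rfl fun k _ => by ring
      rw [h1]
      have h2 : ∀ j, x j * ∑ k, P i j k * y k
          = if j = j' then (∑ k, P i j k * y k) else 0 := by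
        intro j; simp only [hx]; split <;> simp
      rw [Finset.sum_congr rfl fun j _ => h2 j, Finset.sum_ite_eq']
      rw [if_pos (Finset.mem_univ _)]
      have h3 : ∀ k, P i j' k * y k
          = (if k = a then P i j' k * (1/2) else 0) + (if k = b then P i j' k * (-1/2) else 0) := by
        intro k
        by_cases ha1 : k = a
        · have hb1 : ¬ k = b := fun h => hab (ha1.symm.trans h)
          simp only [hy, if_pos ha1, if_neg hb1]
          ring
        · by_cases hb1 : k = b
          · simp only [hy, if_neg ha1, if_pos hb1]; ring
          · simp only [hy, if_neg ha1, if_neg hb1]; ring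
      rw [Finset.sum_congr rfl fun k _ => h3 k, Finset.sum_add_distrib,
        Finset.sum_ite_eq', Finset.sum_ite_eq']
      simp only [Finset.mem_univ, if_pos]
      ring
    have hval : ∑ i, |tvv P x y i| = 1 - c := by
      have : ∑ i, |tvv P x y i| = ∑ i, |P i j' a - P i j' b| / 2 := by
        refine Finset.sum_congr rfl fun i _ => ?_
        rw [htvv i, abs_div]
        norm_num
      rw [this, ← Finset.sum_div, helper_abs_sub_sum _ _ (hP1 j' a) (hP1 j' b), hcab]
      ring
    -- conclude
    have hmem : (1 - c) ∈ {r | ∃ x ∈ S1 n, ∃ y ∈ Z1 n, r = ∑ i, |tvv P x y i|} :=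
      ⟨x, hxS, y, hyZ, hval.symm⟩
    rw [TL]
    refine le_antisymm ?_ ?_
    · refine csSup_le ⟨1 - c, hmem⟩ ?_
      rintro r ⟨x', hx', y', hy', rfl⟩
      exact hub x' hx' y' hy'
    · refine le_csSup ⟨1 - c, ?_⟩ hmem
      rintro r ⟨x', hx', y', hy', rfl⟩
      exact hub x' hx' y' hy'
end
end

section
/- If P ∈ ℝ^{n×n×n} is a stochastic tensor with P_{ijk} ≥ α > 0 for all i,j,k, then T_L(P) ≤ 1 − nα, T_R(P) ≤ 1 − nα, and T(P) ≤ 2(1 − nα). -/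
open Finset Filter Topology

noncomputable section

lemma key_s6 {n : ℕ} (P : Fin n → Fin n → Fin n → ℝ)
    (hP : (∀ i j k, (0:ℝ) ≤ P i j k) ∧ ∀ j k, ∑ i, P i j k = 1)
    (α : ℝ) (hPα : ∀ i j k, α ≤ P i j k)
    (u v : Fin n → ℝ) (hu : ∀ j, 0 ≤ u j) (hus : ∑ j, u j = 1)
    (hvs : ∑ k, v k = 0) (hva : ∑ k, |v k| = 1) :
    ∑ i, |∑ j, ∑ k, P i j k * u j * v k| ≤ 1 - n * α := by
  have h1 : ∀ i, ∑ j, ∑ k, P i j k * u j * v k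
      = ∑ j, ∑ k, (P i j k - α) * u j * v k := by
    intro i
    have : ∑ j, ∑ k, (P i j k - α) * u j * v k
        = ∑ j, ∑ k, P i j k * u j * v k - ∑ j, (α * u j) * ∑ k, v k := by
      rw [← Finset.sum_sub_distrib]
      refine Finset.sum_congr rfl fun j _ => ?_
      rw [Finset.mul_sum, ← Finset.sum_sub_distrib]
      refine Finset.sum_congr rfl fun k _ => by ring
    rw [this, hvs]
    simp
  calc ∑ i, |∑ j, ∑ k, P i j k * u j * v k|
      ≤ ∑ i, ∑ j, ∑ k, (P i j k - α) * u j * |v k| := by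
        refine Finset.sum_le_sum fun i _ => ?_
        rw [h1 i]
        calc |∑ j, ∑ k, (P i j k - α) * u j * v k|
            ≤ ∑ j, |∑ k, (P i j k - α) * u j * v k| := Finset.abs_sum_le_sum_abs _ _
          _ ≤ ∑ j, ∑ k, (P i j k - α) * u j * |v k| := by
              refine Finset.sum_le_sum fun j _ => ?_
              calc |∑ k, (P i j k - α) * u j * v k|
                  ≤ ∑ k, |(P i j k - α) * u j * v k| := Finset.abs_sum_le_sum_abs _ _
                _ ≤ ∑ k, (P i j k - α) * u j * |v k| := by
                    refine Finset.sum_le_sum fun k _ => ?_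
                    rw [abs_mul, abs_mul]
                    have h2 : |P i j k - α| = P i j k - α :=
                      abs_of_nonneg (by linarith [hPα i j k])
                    rw [h2, abs_of_nonneg (hu j)]
    _ = ∑ j, ∑ k, (1 - n * α) * (u j * |v k|) := by
        rw [Finset.sum_comm]
        refine Finset.sum_congr rfl fun j _ => ?_
        rw [Finset.sum_comm]
        refine Finset.sum_congr rfl fun k _ => ?_
        rw [← Finset.sum_mul, ← Finset.sum_mul, Finset.sum_sub_distrib, hP.2 j k]
        simp only [Finset.sum_const, Finset.card_fin, nsmul_eq_mul]
        ring
    _ = 1 - n * α := by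
        simp only [← Finset.mul_sum, hva, mul_one, hus]

theorem stmt6 {n : ℕ} (P : Fin n → Fin n → Fin n → ℝ) (hP : Stochastic P)
    (α : ℝ) (hα : 0 < α) (hPα : ∀ i j k, α ≤ P i j k) :
    TL P ≤ 1 - n * α ∧ TR P ≤ 1 - n * α ∧ TT P ≤ 2 * (1 - n * α) := by
  have hbase : (0:ℝ) ≤ 1 - n * α := by
    rcases Nat.eq_zero_or_pos n with h | h
    · simp [h]
    · have j : Fin n := ⟨0, h⟩
      have h1 : (n:ℝ) * α ≤ 1 := by
        rw [← hP.2 j j]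
        calc (n:ℝ) * α = ∑ _i : Fin n, α := by simp [mul_comm]
          _ ≤ ∑ i, P i j j := Finset.sum_le_sum fun i _ => hPα i j j
      linarith
  have hPpair : (∀ i j k, (0:ℝ) ≤ P i j k) ∧ ∀ j k, ∑ i, P i j k = 1 := hP
  have hTL : ∀ x ∈ S1 n, ∀ y ∈ Z1 n, ∑ i, |tvv P x y i| ≤ 1 - n * α := by
    intro x hx y hy
    exact key_s6 P hPpair α hPα x y hx.1 hx.2 hy.1 hy.2
  have hTR : ∀ x ∈ S1 n, ∀ y ∈ Z1 n, ∑ i, |tvv P y x i| ≤ 1 - n * α := by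
    intro x hx y hy
    calc ∑ i, |tvv P y x i| = ∑ i, |∑ j, ∑ k, P i k j * x j * y k| := by
          refine Finset.sum_congr rfl fun i _ => ?_
          congr 1
          simp only [tvv]
          rw [Finset.sum_comm]
          exact Finset.sum_congr rfl fun k _ => Finset.sum_congr rfl fun j _ => by ring
      _ ≤ 1 - n * α :=
          key_s6 (fun i j k => P i k j) ⟨fun i j k => hP.1 i k j, fun j k => hP.2 k j⟩ α
            (fun i j k => hPα i k j) x y hx.1 hx.2 hy.1 hy.2
  refine ⟨Real.sSup_le ?_ hbase, Real.sSup_le ?_ hbase, Real.sSup_le ?_ (by linarith)⟩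
  · rintro r ⟨x, hx, y, hy, rfl⟩
    exact hTL x hx y hy
  · rintro r ⟨x, hx, y, hy, rfl⟩
    exact hTR x hx y hy
  · rintro r ⟨x, hx, y, hy, rfl⟩
    calc ∑ i, |tvv P x y i + tvv P y x i|
        ≤ ∑ i, (|tvv P x y i| + |tvv P y x i|) :=
          Finset.sum_le_sum fun i _ => abs_add_le _ _
      _ = (∑ i, |tvv P x y i|) + ∑ i, |tvv P y x i| := Finset.sum_add_distrib
      _ ≤ 2 * (1 - n * α) := by linarith [hTL x hx y hy, hTR x hx y hy]
end
end

section
/- For a stochastic tensor P ∈ ℝ^{n×n×n}, T(P) equals the best Lipschitz constant with respect to the ℓ¹ norm of the quadratic map f : S₁ → S₁, f(x) = Pxx, i.e., T(P) = sup_{x≠y ∈ S₁} ‖Pxx − Pyy‖₁ / ‖x − y‖₁. -/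
open Finset Filter Topology

noncomputable section

lemma tvv_smul_l {n : ℕ} (P : Fin n → Fin n → Fin n → ℝ) (a : ℝ) (u w : Fin n → ℝ) (i : Fin n) :
    tvv P (fun j => a * u j) w i = a * tvv P u w i := by
  unfold tvv
  rw [Finset.mul_sum]
  refine Finset.sum_congr rfl fun j _ => ?_
  rw [Finset.mul_sum]
  exact Finset.sum_congr rfl fun k _ => by ring

lemma tvv_smul_r {n : ℕ} (P : Fin n → Fin n → Fin n → ℝ) (a : ℝ) (u w : Fin n → ℝ) (i : Fin n) :
    tvv P u (fun k => a * w k) i = a * tvv P u w i := by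
  unfold tvv
  rw [Finset.mul_sum]
  refine Finset.sum_congr rfl fun j _ => ?_
  rw [Finset.mul_sum]
  exact Finset.sum_congr rfl fun k _ => by ring

lemma tvv_lin_l {n : ℕ} (P : Fin n → Fin n → Fin n → ℝ) (a b : ℝ) (u v w : Fin n → ℝ) (i : Fin n) :
    tvv P (fun j => a * u j + b * v j) w i = a * tvv P u w i + b * tvv P v w i := by
  unfold tvv
  rw [Finset.mul_sum, Finset.mul_sum, ← Finset.sum_add_distrib]
  refine Finset.sum_congr rfl fun j _ => ?_
  rw [Finset.mul_sum, Finset.mul_sum, ← Finset.sum_add_distrib]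
  exact Finset.sum_congr rfl fun k _ => by ring

lemma tvv_lin_r {n : ℕ} (P : Fin n → Fin n → Fin n → ℝ) (a b : ℝ) (u v w : Fin n → ℝ) (i : Fin n) :
    tvv P w (fun k => a * u k + b * v k) i = a * tvv P w u i + b * tvv P w v i := by
  unfold tvv
  rw [Finset.mul_sum, Finset.mul_sum, ← Finset.sum_add_distrib]
  refine Finset.sum_congr rfl fun j _ => ?_
  rw [Finset.mul_sum, Finset.mul_sum, ← Finset.sum_add_distrib]
  exact Finset.sum_congr rfl fun k _ => by ring

lemma tvv_key {n : ℕ} (P : Fin n → Fin n → Fin n → ℝ) (x y : Fin n → ℝ) (i : Fin n) :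
    tvv P x x i - tvv P y y i =
      tvv P (fun j => (x j + y j) / 2) (fun k => x k - y k) i
        + tvv P (fun j => x j - y j) (fun k => (x k + y k) / 2) i := by
  unfold tvv
  rw [← Finset.sum_sub_distrib, ← Finset.sum_add_distrib]
  refine Finset.sum_congr rfl fun j _ => ?_
  rw [← Finset.sum_sub_distrib, ← Finset.sum_add_distrib]
  exact Finset.sum_congr rfl fun k _ => by ring

lemma tvv_abs_bound {n : ℕ} {P : Fin n → Fin n → Fin n → ℝ} (hP : Stochastic P)
    (u v : Fin n → ℝ) : ∑ i, |tvv P u v i| ≤ (∑ j, |u j|) * (∑ k, |v k|) := by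
  calc ∑ i, |tvv P u v i| ≤ ∑ i, ∑ j, ∑ k, |P i j k * u j * v k| := by
        refine Finset.sum_le_sum fun i _ => ?_
        exact (Finset.abs_sum_le_sum_abs _ _).trans
          (Finset.sum_le_sum fun j _ => Finset.abs_sum_le_sum_abs _ _)
    _ = ∑ j, ∑ k, ∑ i, |P i j k * u j * v k| := by
        rw [Finset.sum_comm]
        exact Finset.sum_congr rfl fun j _ => Finset.sum_comm
    _ = ∑ j, ∑ k, |u j| * |v k| := by
        refine Finset.sum_congr rfl fun j _ => Finset.sum_congr rfl fun k _ => ?_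
        have : ∀ i, |P i j k * u j * v k| = P i j k * (|u j| * |v k|) := fun i => by
          rw [abs_mul, abs_mul, abs_of_nonneg (hP.1 i j k)]; ring
        simp only [this]
        rw [← Finset.sum_mul, hP.2 j k, one_mul]
    _ = (∑ j, |u j|) * (∑ k, |v k|) := by rw [Finset.sum_mul_sum]

lemma abs_sum_add_le {n : ℕ} (u v : Fin n → ℝ) :
    ∑ i, |u i + v i| ≤ (∑ i, |u i|) + ∑ i, |v i| := by
  rw [← Finset.sum_add_distrib]
  exact Finset.sum_le_sum fun i _ => abs_add_le _ _

-- B ⊆ A direction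
lemma quot_mem {n : ℕ} (P : Fin n → Fin n → Fin n → ℝ) {x y : Fin n → ℝ}
    (hx : x ∈ S1 n) (hy : y ∈ S1 n) (hxy : x ≠ y) :
    ∃ u ∈ S1 n, ∃ v ∈ Z1 n,
      (∑ i, |tvv P x x i - tvv P y y i|) / (∑ i, |x i - y i|)
        = ∑ i, |tvv P u v i + tvv P v u i| := by
  set s : ℝ := ∑ i, |x i - y i| with hs_def
  have hs0 : 0 ≤ s := Finset.sum_nonneg fun i _ => abs_nonneg _
  have hsne : s ≠ 0 := by
    intro h
    apply hxy
    funext i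
    have h2 := (Finset.sum_eq_zero_iff_of_nonneg
      (fun i (_ : i ∈ Finset.univ) => abs_nonneg (x i - y i))).mp h i (Finset.mem_univ i)
    linarith [sub_eq_zero.mp (abs_eq_zero.mp h2)]
  have hs : 0 < s := lt_of_le_of_ne hs0 (Ne.symm hsne)
  refine ⟨fun j => (x j + y j) / 2, ?_, fun k => s⁻¹ * (x k - y k), ?_, ?_⟩
  · constructor
    · intro i; have := hx.1 i; have := hy.1 i; positivity
    · show (∑ j, (x j + y j) / 2) = 1
      rw [show (∑ j, (x j + y j) / 2) = (∑ j, x j + ∑ j, y j) / 2 by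
        rw [← Finset.sum_add_distrib, Finset.sum_div], hx.2, hy.2]
      norm_num
  · constructor
    · rw [← Finset.mul_sum, Finset.sum_sub_distrib, hx.2, hy.2]; ring
    · have : ∀ k, |s⁻¹ * (x k - y k)| = s⁻¹ * |x k - y k| := fun k => by
        rw [abs_mul, abs_of_nonneg (inv_nonneg.mpr hs0)]
      simp only [this]
      rw [← Finset.mul_sum, ← hs_def, inv_mul_cancel₀ hsne]
  · have hval : ∀ i, tvv P (fun j => (x j + y j) / 2) (fun k => s⁻¹ * (x k - y k)) i
        + tvv P (fun k => s⁻¹ * (x k - y k)) (fun j => (x j + y j) / 2) i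
        = s⁻¹ * (tvv P x x i - tvv P y y i) := by
      intro i
      rw [tvv_smul_r, tvv_smul_l, tvv_key P x y i]
      ring
    rw [show (∑ i, |tvv P (fun j => (x j + y j) / 2) (fun k => s⁻¹ * (x k - y k)) i
        + tvv P (fun k => s⁻¹ * (x k - y k)) (fun j => (x j + y j) / 2) i|)
        = ∑ i, s⁻¹ * |tvv P x x i - tvv P y y i| from
      Finset.sum_congr rfl fun i _ => by
        rw [hval i, abs_mul, abs_of_nonneg (inv_nonneg.mpr hs0)]]
    rw [← Finset.mul_sum, div_eq_inv_mul]

-- the perturbation construction: every value of A is ε-approximated from B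
lemma exists_quot {n : ℕ} {P : Fin n → Fin n → Fin n → ℝ} (hP : Stochastic P)
    {x y : Fin n → ℝ} (hx : x ∈ S1 n) (hy : y ∈ Z1 n) {ε : ℝ} (hε : 0 < ε) (hε1 : ε < 1) :
    ∃ u ∈ S1 n, ∃ v ∈ S1 n, u ≠ v ∧
      (1 - ε) * (∑ i, |tvv P x y i + tvv P y x i|) ≤
        (∑ i, |tvv P u u i - tvv P v v i|) / (∑ i, |u i - v i|) + 2 * ε := by
  have hn : 0 < n := by
    rcases Nat.eq_zero_or_pos n with h | h
    · exfalso; subst h; simpa using hx.2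
    · exact h
  have hnR : (0:ℝ) < n := by exact_mod_cast hn
  set c : Fin n → ℝ := fun _ => (n : ℝ)⁻¹ with hc_def
  have hc : c ∈ S1 n := by
    constructor
    · intro i; positivity
    · simp [hc_def, Finset.sum_const, Finset.card_univ]
      field_simp
  set m : Fin n → ℝ := fun j => (1 - ε) * x j + ε * c j with hm_def
  have hm : m ∈ S1 n := by
    constructor
    · intro j
      show 0 ≤ (1 - ε) * x j + ε * (n:ℝ)⁻¹
      have h1 := hx.1 j
      have h2 : (0:ℝ) ≤ (n:ℝ)⁻¹ := by positivity
      nlinarith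
    · show (∑ j, ((1 - ε) * x j + ε * c j)) = 1
      rw [Finset.sum_add_distrib, ← Finset.mul_sum, ← Finset.mul_sum, hx.2, hc.2]
      ring
  set t : ℝ := ε * (n : ℝ)⁻¹ with ht_def
  have ht : 0 < t := by positivity
  have hmlb : ∀ j, t ≤ m j := by
    intro j
    have := hx.1 j
    show t ≤ (1 - ε) * x j + ε * (n:ℝ)⁻¹
    nlinarith
  have hyabs : ∀ k, |y k| ≤ 1 := by
    intro k
    rw [← hy.2]
    exact Finset.single_le_sum (fun i _ => abs_nonneg (y i)) (Finset.mem_univ k)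
  set u : Fin n → ℝ := fun j => m j + t * y j with hu_def
  set v : Fin n → ℝ := fun j => m j - t * y j with hv_def
  have hmem : ∀ w ∈ ({u, v} : Set (Fin n → ℝ)), True := fun _ _ => trivial
  have hu : u ∈ S1 n := by
    constructor
    · intro j
      have h1 := hmlb j
      have h2 := hyabs j
      have := neg_abs_le (y j)
      show 0 ≤ m j + t * y j
      nlinarith
    · show (∑ j, (m j + t * y j)) = 1
      rw [Finset.sum_add_distrib, ← Finset.mul_sum, hm.2, hy.1]
      ring
  have hv : v ∈ S1 n := by
    constructor
    · intro j
      have h1 := hmlb j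
      have h2 := hyabs j
      have := le_abs_self (y j)
      show 0 ≤ m j - t * y j
      nlinarith
    · show (∑ j, (m j - t * y j)) = 1
      rw [Finset.sum_sub_distrib, ← Finset.mul_sum, hm.2, hy.1]
      ring
  have hyne : ∃ k, y k ≠ 0 := by
    by_contra h
    push_neg at h
    have : (∑ i, |y i|) = 0 := Finset.sum_eq_zero fun i _ => by rw [h i]; simp
    rw [hy.2] at this; norm_num at this
  obtain ⟨k, hk⟩ := hyne
  have huv : u ≠ v := by
    intro h
    apply hk
    have := congrFun h k
    simp only [hu_def, hv_def] at this
    nlinarith [this]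
  -- denominator
  have hden : (∑ i, |u i - v i|) = 2 * t := by
    have : ∀ i, |u i - v i| = 2 * t * |y i| := by
      intro i
      show |(m i + t * y i) - (m i - t * y i)| = 2 * t * |y i|
      rw [show (m i + t * y i) - (m i - t * y i) = (2 * t) * y i by ring, abs_mul,
        abs_of_pos (by linarith : (0:ℝ) < 2 * t)]
    simp only [this]
    rw [← Finset.mul_sum, hy.2, mul_one]
  -- numerator
  have hnum : ∀ i, tvv P u u i - tvv P v v i = (2 * t) * (tvv P m y i + tvv P y m i) := by
    intro i
    rw [tvv_key P u v i]
    have h1 : (fun j => (u j + v j) / 2) = m := by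
      funext j; show ((m j + t * y j) + (m j - t * y j)) / 2 = m j; ring
    have h2 : (fun j => u j - v j) = fun j => (2 * t) * y j := by
      funext j; show (m j + t * y j) - (m j - t * y j) = (2 * t) * y j; ring
    rw [h1, h2, tvv_smul_l, tvv_smul_r]
    ring
  have hnumsum : (∑ i, |tvv P u u i - tvv P v v i|)
      = 2 * t * ∑ i, |tvv P m y i + tvv P y m i| := by
    rw [Finset.mul_sum]
    refine Finset.sum_congr rfl fun i _ => ?_
    rw [hnum i, abs_mul, abs_of_pos (by linarith : (0:ℝ) < 2 * t)]
  have hquot : (∑ i, |tvv P u u i - tvv P v v i|) / (∑ i, |u i - v i|)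
      = ∑ i, |tvv P m y i + tvv P y m i| := by
    rw [hnumsum, hden, mul_div_assoc, mul_comm]
    field_simp
  refine ⟨u, hu, v, hv, huv, ?_⟩
  rw [hquot]
  -- expand m bilinearly
  have hexp : ∀ i, tvv P m y i + tvv P y m i
      = (1 - ε) * (tvv P x y i + tvv P y x i) + ε * (tvv P c y i + tvv P y c i) := by
    intro i
    rw [show tvv P m y i = (1 - ε) * tvv P x y i + ε * tvv P c y i from tvv_lin_l P _ _ x c y i,
        show tvv P y m i = (1 - ε) * tvv P y x i + ε * tvv P y c i from tvv_lin_r P _ _ x c y i]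
    ring
  have hzbound : (∑ i, |tvv P c y i + tvv P y c i|) ≤ 2 := by
    calc (∑ i, |tvv P c y i + tvv P y c i|)
        ≤ (∑ i, |tvv P c y i|) + ∑ i, |tvv P y c i| := abs_sum_add_le _ _
      _ ≤ (∑ j, |c j|) * (∑ k, |y k|) + (∑ j, |y j|) * (∑ k, |c k|) :=
          add_le_add (tvv_abs_bound hP c y) (tvv_abs_bound hP y c)
      _ = 2 := by
          have hcabs : (∑ j, |c j|) = 1 := by
            rw [show (∑ j, |c j|) = ∑ j, c j from
              Finset.sum_congr rfl fun j _ => abs_of_nonneg (hc.1 j), hc.2]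
          rw [hcabs, hy.2]; ring
  calc (1 - ε) * (∑ i, |tvv P x y i + tvv P y x i|)
      = ∑ i, |(1 - ε) * (tvv P x y i + tvv P y x i)| := by
        rw [Finset.mul_sum]
        exact Finset.sum_congr rfl fun i _ => by
          rw [abs_mul, abs_of_pos (by linarith : (0:ℝ) < 1 - ε)]
    _ ≤ ∑ i, (|tvv P m y i + tvv P y m i| + ε * |tvv P c y i + tvv P y c i|) := by
        refine Finset.sum_le_sum fun i _ => ?_
        have h := hexp i
        have habs : |(1 - ε) * (tvv P x y i + tvv P y x i)|
            ≤ |tvv P m y i + tvv P y m i| + |ε * (tvv P c y i + tvv P y c i)| := by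
          rw [show (1 - ε) * (tvv P x y i + tvv P y x i)
              = (tvv P m y i + tvv P y m i) - ε * (tvv P c y i + tvv P y c i) by
            rw [h]; ring]
          exact abs_sub _ _
        rw [abs_mul]
        have h2 : |ε * (tvv P c y i + tvv P y c i)| = ε * |tvv P c y i + tvv P y c i| := by
          rw [abs_mul, abs_of_pos hε]
        have h3 : |(1 - ε) * (tvv P x y i + tvv P y x i)|
            = |1 - ε| * |tvv P x y i + tvv P y x i| := abs_mul _ _
        have h4 : |1 - ε| = 1 - ε := abs_of_pos (by linarith)
        linarith [habs]
    _ = (∑ i, |tvv P m y i + tvv P y m i|) + ε * ∑ i, |tvv P c y i + tvv P y c i| := by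
        rw [Finset.sum_add_distrib, Finset.mul_sum]
    _ ≤ (∑ i, |tvv P m y i + tvv P y m i|) + 2 * ε := by
        nlinarith [hzbound, hε.le]

theorem stmt9 {n : ℕ} (P : Fin n → Fin n → Fin n → ℝ) (hP : Stochastic P) :
    TT P = sSup {r | ∃ x ∈ S1 n, ∃ y ∈ S1 n, x ≠ y ∧
      r = (∑ i, |tvv P x x i - tvv P y y i|) / (∑ i, |x i - y i|)} := by
  classical
  unfold TT
  set A := {r | ∃ x ∈ S1 n, ∃ y ∈ Z1 n, r = ∑ i, |tvv P x y i + tvv P y x i|} with hA_def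
  set B := {r | ∃ x ∈ S1 n, ∃ y ∈ S1 n, x ≠ y ∧
      r = (∑ i, |tvv P x x i - tvv P y y i|) / (∑ i, |x i - y i|)} with hB_def
  have hBA : B ⊆ A := by
    rintro b ⟨x, hx, y, hy, hxy, rfl⟩
    obtain ⟨u, hu, v, hv, heq⟩ := quot_mem P hx hy hxy
    exact ⟨u, hu, v, hv, heq⟩
  have hbd : ∀ a ∈ A, a ≤ 2 := by
    rintro a ⟨x, hx, y, hy, rfl⟩
    have hxabs : (∑ j, |x j|) = 1 := by
      rw [show (∑ j, |x j|) = ∑ j, x j from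
        Finset.sum_congr rfl fun j _ => abs_of_nonneg (hx.1 j), hx.2]
    calc (∑ i, |tvv P x y i + tvv P y x i|)
        ≤ (∑ i, |tvv P x y i|) + ∑ i, |tvv P y x i| := abs_sum_add_le _ _
      _ ≤ (∑ j, |x j|) * (∑ k, |y k|) + (∑ j, |y j|) * (∑ k, |x k|) :=
          add_le_add (tvv_abs_bound hP x y) (tvv_abs_bound hP y x)
      _ = 2 := by rw [hxabs, hy.2]; ring
  have hAbdd : BddAbove A := ⟨2, hbd⟩
  rcases Set.eq_empty_or_nonempty A with hAe | hAne
  · have hBe : B = ∅ := Set.subset_empty_iff.mp (hAe ▸ hBA)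
    rw [hAe, hBe]
  · obtain ⟨a0, x0, hx0, y0, hy0, ha0⟩ := hAne
    have hBne : B.Nonempty := by
      obtain ⟨u, hu, v, hv, huv, _⟩ :=
        exists_quot hP hx0 hy0 (by norm_num : (0:ℝ) < 1/2) (by norm_num)
      exact ⟨_, u, hu, v, hv, huv, rfl⟩
    have hBbdd : BddAbove B := ⟨2, fun b hb => hbd b (hBA hb)⟩
    apply le_antisymm
    · refine csSup_le ⟨a0, x0, hx0, y0, hy0, ha0⟩ ?_
      rintro a ⟨x, hx, y, hy, rfl⟩
      refine le_of_forall_pos_le_add ?_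
      intro δ hδ
      set w := ∑ i, |tvv P x y i + tvv P y x i| with hw_def
      have hw0 : 0 ≤ w := Finset.sum_nonneg fun i _ => abs_nonneg _
      set ε := min (δ / (w + 3)) (1 / 2) with hε_def
      have hεpos : 0 < ε := lt_min (by positivity) (by norm_num)
      have hε1 : ε < 1 := lt_of_le_of_lt (min_le_right _ _) (by norm_num)
      obtain ⟨u, hu, v, hv, huv, hineq⟩ := exists_quot hP hx hy hεpos hε1
      have hq_le : (∑ i, |tvv P u u i - tvv P v v i|) / (∑ i, |u i - v i|) ≤ sSup B :=
        le_csSup hBbdd ⟨u, hu, v, hv, huv, rfl⟩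
      have hεd : ε * (w + 3) ≤ δ :=
        (le_div_iff₀ (by positivity : (0:ℝ) < w + 3)).mp (min_le_left _ _)
      nlinarith [hineq, hq_le, hεd, hεpos, hw0]
    · exact csSup_le hBne fun b hb => le_csSup hAbdd (hBA hb)
end
end

section
/- Let P and P′ be stochastic tensors with T(P) < 1. Then the stochastic solution of x = Pxx is unique, and for any x′ ∈ S₁ with x′ = P′x′x′ it holds ‖x − x′‖₁ ≤ ‖P − P′‖₁ / (1 − T(P)). -/
open Finset Filter Topology

noncomputable section

lemma tvv_abs_le_of_col {n : ℕ} (Q : Fin n → Fin n → Fin n → ℝ) (c : ℝ)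
    (hc : ∀ j k, ∑ i, |Q i j k| ≤ c) (u v : Fin n → ℝ) :
    ∑ i, |tvv Q u v i| ≤ c * ((∑ j, |u j|) * (∑ k, |v k|)) := by
  have step1 : ∑ i, |tvv Q u v i| ≤ ∑ i, ∑ j, ∑ k, |Q i j k| * |u j| * |v k| := by
    apply Finset.sum_le_sum; intro i _
    calc |tvv Q u v i| ≤ ∑ j, |∑ k, Q i j k * u j * v k| := Finset.abs_sum_le_sum_abs _ _
      _ ≤ ∑ j, ∑ k, |Q i j k * u j * v k| :=
          Finset.sum_le_sum fun j _ => Finset.abs_sum_le_sum_abs _ _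
      _ = ∑ j, ∑ k, |Q i j k| * |u j| * |v k| := by simp [abs_mul]
  have step2 : ∑ i, ∑ j, ∑ k, |Q i j k| * |u j| * |v k|
      = ∑ j, ∑ k, (∑ i, |Q i j k|) * (|u j| * |v k|) := by
    rw [Finset.sum_comm]
    refine Finset.sum_congr rfl fun j _ => ?_
    rw [Finset.sum_comm]
    refine Finset.sum_congr rfl fun k _ => ?_
    rw [Finset.sum_mul]
    refine Finset.sum_congr rfl fun i _ => by ring
  have step3 : ∑ j, ∑ k, (∑ i, |Q i j k|) * (|u j| * |v k|)
      ≤ ∑ j, ∑ k, c * (|u j| * |v k|) := by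
    refine Finset.sum_le_sum fun j _ => Finset.sum_le_sum fun k _ => ?_
    exact mul_le_mul_of_nonneg_right (hc j k) (by positivity)
  have step4 : ∑ j, ∑ k, c * (|u j| * |v k|) = c * ((∑ j, |u j|) * (∑ k, |v k|)) := by
    rw [Finset.sum_mul_sum, Finset.mul_sum]
    exact Finset.sum_congr rfl fun j _ => by rw [Finset.mul_sum]
  linarith

lemma stoch_col {n : ℕ} {P : Fin n → Fin n → Fin n → ℝ} (hP : Stochastic P) (j k : Fin n) :
    ∑ i, |P i j k| ≤ 1 := by
  rw [show ∑ i, |P i j k| = ∑ i, P i j k from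
    Finset.sum_congr rfl fun i _ => abs_of_nonneg (hP.1 i j k)]
  exact le_of_eq (hP.2 j k)

lemma TT_bdd {n : ℕ} (P : Fin n → Fin n → Fin n → ℝ) (hP : Stochastic P) :
    BddAbove {r | ∃ x ∈ S1 n, ∃ y ∈ Z1 n, r = ∑ i, |tvv P x y i + tvv P y x i|} := by
  refine ⟨2, ?_⟩
  rintro r ⟨x, hx, y, hy, rfl⟩
  have hx1 : ∑ j, |x j| = 1 := by
    rw [Finset.sum_congr rfl fun j _ => abs_of_nonneg (hx.1 j)]; exact hx.2
  have h1 := tvv_abs_le_of_col P 1 (stoch_col hP) x y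
  have h2 := tvv_abs_le_of_col P 1 (stoch_col hP) y x
  rw [hx1, hy.2] at h1 h2
  have h3 : ∑ i, |tvv P x y i + tvv P y x i| ≤ ∑ i, (|tvv P x y i| + |tvv P y x i|) :=
    Finset.sum_le_sum fun i _ => abs_add_le _ _
  rw [Finset.sum_add_distrib] at h3
  simp only [one_mul, mul_one] at h1 h2
  linarith

lemma key_id {n : ℕ} (P : Fin n → Fin n → Fin n → ℝ) (x y : Fin n → ℝ) {δ : ℝ} (hδ : δ ≠ 0)
    (i : Fin n) :
    tvv P x x i - tvv P y y i =
      δ * (tvv P (fun j => (x j + y j) / 2) (fun j => (x j - y j) / δ) i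
        + tvv P (fun j => (x j - y j) / δ) (fun j => (x j + y j) / 2) i) := by
  simp only [tvv, ← Finset.sum_add_distrib, ← Finset.sum_sub_distrib, Finset.mul_sum]
  refine Finset.sum_congr rfl fun j _ => Finset.sum_congr rfl fun k _ => ?_
  field_simp
  ring

lemma key_est {n : ℕ} (P : Fin n → Fin n → Fin n → ℝ) (hP : Stochastic P)
    {x y : Fin n → ℝ} (hx : x ∈ S1 n) (hy : y ∈ S1 n) :
    ∑ i, |tvv P x x i - tvv P y y i| ≤ TT P * ∑ i, |x i - y i| := by
  have hδ0 : 0 ≤ ∑ i, |x i - y i| := Finset.sum_nonneg fun i _ => abs_nonneg _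
  rcases eq_or_lt_of_le hδ0 with heq | hpos
  · have hxy : x = y := by
      funext i
      have := (Finset.sum_eq_zero_iff_of_nonneg (fun i _ => abs_nonneg (x i - y i))).mp
        heq.symm i (Finset.mem_univ i)
      have := abs_eq_zero.mp this
      linarith
    rw [hxy]
    simp
  · set δ : ℝ := ∑ i, |x i - y i| with hδdef
    have hδne : δ ≠ 0 := ne_of_gt hpos
    set z : Fin n → ℝ := fun j => (x j + y j) / 2 with hz
    set u : Fin n → ℝ := fun j => (x j - y j) / δ with hu
    have hzS : z ∈ S1 n := by
      constructor
      · intro i; have := hx.1 i; have := hy.1 i; simp only [hz]; positivity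
      · simp only [hz]
        rw [show ∑ j, (x j + y j) / 2 = (∑ j, x j + ∑ j, y j) / 2 by
          rw [← Finset.sum_add_distrib, Finset.sum_div]]
        rw [hx.2, hy.2]; norm_num
    have huZ : u ∈ Z1 n := by
      constructor
      · simp only [hu]
        rw [show ∑ j, (x j - y j) / δ = (∑ j, x j - ∑ j, y j) / δ by
          rw [← Finset.sum_sub_distrib, Finset.sum_div]]
        rw [hx.2, hy.2]; norm_num
      · simp only [hu, abs_div, abs_of_pos hpos]
        rw [← Finset.sum_div, ← hδdef, div_self hδne]
    have hmem : (∑ i, |tvv P z u i + tvv P u z i|) ≤ TT P :=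
      le_csSup (TT_bdd P hP) ⟨z, hzS, u, huZ, rfl⟩
    calc ∑ i, |tvv P x x i - tvv P y y i|
        = ∑ i, δ * |tvv P z u i + tvv P u z i| := by
          refine Finset.sum_congr rfl fun i _ => ?_
          rw [key_id P x y hδne i, abs_mul, abs_of_pos hpos]
      _ = δ * ∑ i, |tvv P z u i + tvv P u z i| := by rw [Finset.mul_sum]
      _ ≤ δ * TT P := mul_le_mul_of_nonneg_left hmem (le_of_lt hpos)
      _ = TT P * δ := mul_comm _ _

lemma col_le_tnorm {n : ℕ} (Q : Fin n → Fin n → Fin n → ℝ) (j k : Fin n) :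
    ∑ i, |Q i j k| ≤ tnorm Q := by
  have h1 : ∑ i, |Q i j k| ≤ ⨆ k', ∑ i, |Q i j k'| :=
    le_ciSup (f := fun k' => ∑ i, |Q i j k'|) (Set.Finite.bddAbove (Set.finite_range _)) k
  have h2 : (⨆ k', ∑ i, |Q i j k'|) ≤ tnorm Q :=
    le_ciSup (f := fun j' => ⨆ k', ∑ i, |Q i j' k'|) (Set.Finite.bddAbove (Set.finite_range _)) j
  exact h1.trans h2

theorem stmt13 {n : ℕ} (P P' : Fin n → Fin n → Fin n → ℝ)
    (hP : Stochastic P) (hP' : Stochastic P') (h : TT P < 1) :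
    (∀ x ∈ S1 n, ∀ y ∈ S1 n, tvv P x x = x → tvv P y y = y → x = y) ∧
    ∀ x ∈ S1 n, tvv P x x = x →
      ∀ x' ∈ S1 n, tvv P' x' x' = x' →
        ∑ i, |x i - x' i| ≤ tnorm (P - P') / (1 - TT P) := by
  constructor
  · intro x hx y hy hxf hyf
    have hk := key_est P hP hx hy
    rw [hxf, hyf] at hk
    have hδ0 : 0 ≤ ∑ i, |x i - y i| := Finset.sum_nonneg fun i _ => abs_nonneg _
    have hzero : ∑ i, |x i - y i| = 0 := by nlinarith
    funext i
    have := (Finset.sum_eq_zero_iff_of_nonneg (fun i _ => abs_nonneg (x i - y i))).mp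
      hzero i (Finset.mem_univ i)
    have := abs_eq_zero.mp this
    linarith
  · intro x hx hxf x' hx' hxf'
    have hx'1 : ∑ j, |x' j| = 1 := by
      rw [Finset.sum_congr rfl fun j _ => abs_of_nonneg (hx'.1 j)]; exact hx'.2
    have hsplit : ∀ i, x i - x' i =
        (tvv P x x i - tvv P x' x' i) + tvv (P - P') x' x' i := by
      intro i
      have : tvv (P - P') x' x' i = tvv P x' x' i - tvv P' x' x' i := by
        simp only [tvv, Pi.sub_apply, sub_mul, Finset.sum_sub_distrib]
      rw [this]
      linarith [congrFun hxf i, congrFun hxf' i]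
    have hk := key_est P hP hx hx'
    rw [hxf] at hk
    have htn := tvv_abs_le_of_col (P - P') (tnorm (P - P')) (col_le_tnorm _) x' x'
    rw [hx'1] at htn
    simp only [mul_one] at htn
    have hmain : ∑ i, |x i - x' i| ≤ TT P * ∑ i, |x i - x' i| + tnorm (P - P') := by
      calc ∑ i, |x i - x' i|
          = ∑ i, |(tvv P x x i - tvv P x' x' i) + tvv (P - P') x' x' i| := by
            refine Finset.sum_congr rfl fun i _ => by rw [hsplit i]
        _ ≤ ∑ i, (|tvv P x x i - tvv P x' x' i| + |tvv (P - P') x' x' i|) :=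
            Finset.sum_le_sum fun i _ => abs_add_le _ _
        _ = ∑ i, |tvv P x x i - tvv P x' x' i| + ∑ i, |tvv (P - P') x' x' i| :=
            Finset.sum_add_distrib
        _ ≤ TT P * ∑ i, |x i - x' i| + tnorm (P - P') := by
            rw [hxf]
            exact add_le_add hk htn
    rw [le_div_iff₀ (by linarith : (0:ℝ) < 1 - TT P)]
    have hδ0 : 0 ≤ ∑ i, |x i - x' i| := Finset.sum_nonneg fun i _ => abs_nonneg _
    nlinarith
end
end

section
/- For a stochastic tensor P ∈ ℝ^{n×n×n}, the Li–Ng coefficient δ(P) = min over subsets I ⊆ {1,…,n} of ( min_{j,k} ∑_{i∉I} P_{ijk} + min_{j,k} ∑_{i∈I} P_{ijk} ) satisfies δ(P) = 1 − (1/2) max_{j₁,j₂,k₁,k₂} ∑ᵢ |P_{ij₁k₁} − P_{ij₂k₂}|. -/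
open Finset Filter Topology

noncomputable section

theorem stmt15 {n : ℕ} (hn : 0 < n) (P : Fin n → Fin n → Fin n → ℝ) (hP : Stochastic P) :
    (⨅ I : Finset (Fin n),
        ((⨅ j, ⨅ k, ∑ i ∈ Iᶜ, P i j k) + ⨅ j, ⨅ k, ∑ i ∈ I, P i j k)) =
      1 - (1 / 2) * ⨆ j₁, ⨆ j₂, ⨆ k₁, ⨆ k₂, ∑ i, |P i j₁ k₁ - P i j₂ k₂| := by
  haveI : Nonempty (Fin n) := Fin.pos_iff_nonempty.mp hn
  obtain ⟨hP0, hP1⟩ := hP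
  set A := (⨅ I : Finset (Fin n),
      ((⨅ j, ⨅ k, ∑ i ∈ Iᶜ, P i j k) + ⨅ j, ⨅ k, ∑ i ∈ I, P i j k)) with hA
  set m := (⨆ j₁, ⨆ j₂, ⨆ k₁, ⨆ k₂, ∑ i, |P i j₁ k₁ - P i j₂ k₂|) with hm
  have key : ∀ (I : Finset (Fin n)) (j₁ k₁ j₂ k₂ : Fin n),
      (∑ i ∈ Iᶜ, P i j₁ k₁) + ∑ i ∈ I, P i j₂ k₂
        = 1 - ∑ i ∈ I, (P i j₁ k₁ - P i j₂ k₂) := by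
    intro I j₁ k₁ j₂ k₂
    have h1 : (∑ i ∈ Iᶜ, P i j₁ k₁) + ∑ i ∈ I, P i j₁ k₁ = 1 := by
      rw [Finset.sum_compl_add_sum]; exact hP1 j₁ k₁
    rw [Finset.sum_sub_distrib]; linarith
  have habs : ∀ (j₁ k₁ j₂ k₂ : Fin n),
      ∑ i, max (P i j₁ k₁ - P i j₂ k₂) 0 = (1/2) * ∑ i, |P i j₁ k₁ - P i j₂ k₂| := by
    intro j₁ k₁ j₂ k₂
    have hd0 : ∑ i, (P i j₁ k₁ - P i j₂ k₂) = 0 := by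
      rw [Finset.sum_sub_distrib, hP1, hP1]; ring
    have hmx : ∀ i : Fin n, max (P i j₁ k₁ - P i j₂ k₂) 0
        = ((P i j₁ k₁ - P i j₂ k₂) + |P i j₁ k₁ - P i j₂ k₂|)/2 := by
      intro i
      rcases le_or_gt 0 (P i j₁ k₁ - P i j₂ k₂) with h | h
      · rw [max_eq_left h, abs_of_nonneg h]; ring
      · rw [max_eq_right h.le, abs_of_neg h]; ring
    simp_rw [hmx]
    rw [← Finset.sum_div, Finset.sum_add_distrib, hd0]; ring
  have dir1 : A ≤ 1 - 1/2 * m := by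
    have hm2 : m ≤ 2 * (1 - A) := by
      refine ciSup_le fun j₁ => ciSup_le fun j₂ => ciSup_le fun k₁ => ciSup_le fun k₂ => ?_
      classical
      set I : Finset (Fin n) := Finset.univ.filter (fun i => 0 < P i j₁ k₁ - P i j₂ k₂)
        with hI
      have hsum : ∑ i ∈ I, (P i j₁ k₁ - P i j₂ k₂)
          = ∑ i, max (P i j₁ k₁ - P i j₂ k₂) 0 := by
        rw [hI, Finset.sum_filter]
        refine Finset.sum_congr rfl fun i _ => ?_
        split_ifs with h
        · rw [max_eq_left h.le]
        · rw [max_eq_right (not_lt.mp h)]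
      have hAle : A ≤ (∑ i ∈ Iᶜ, P i j₁ k₁) + ∑ i ∈ I, P i j₂ k₂ := by
        calc A ≤ (⨅ j, ⨅ k, ∑ i ∈ Iᶜ, P i j k) + ⨅ j, ⨅ k, ∑ i ∈ I, P i j k :=
              ciInf_le (Finite.bddBelow_range _) I
          _ ≤ _ := by
              gcongr
              · exact le_trans (ciInf_le (Finite.bddBelow_range _) j₁)
                  (ciInf_le (Finite.bddBelow_range _) k₁)
              · exact le_trans (ciInf_le (Finite.bddBelow_range _) j₂)
                  (ciInf_le (Finite.bddBelow_range _) k₂)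
      rw [key I j₁ k₁ j₂ k₂, hsum, habs j₁ k₁ j₂ k₂] at hAle
      linarith
    linarith
  have dir2 : 1 - 1/2 * m ≤ A := by
    refine le_ciInf fun I => ?_
    obtain ⟨⟨j₁, k₁⟩, h1⟩ :=
      Finite.exists_min (fun p : Fin n × Fin n => ∑ i ∈ Iᶜ, P i p.1 p.2)
    obtain ⟨⟨j₂, k₂⟩, h2⟩ :=
      Finite.exists_min (fun p : Fin n × Fin n => ∑ i ∈ I, P i p.1 p.2)
    have e1 : (⨅ j, ⨅ k, ∑ i ∈ Iᶜ, P i j k) = ∑ i ∈ Iᶜ, P i j₁ k₁ := by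
      refine le_antisymm ?_ (le_ciInf fun j => le_ciInf fun k => h1 (j, k))
      exact le_trans (ciInf_le (Finite.bddBelow_range _) j₁)
        (ciInf_le (Finite.bddBelow_range _) k₁)
    have e2 : (⨅ j, ⨅ k, ∑ i ∈ I, P i j k) = ∑ i ∈ I, P i j₂ k₂ := by
      refine le_antisymm ?_ (le_ciInf fun j => le_ciInf fun k => h2 (j, k))
      exact le_trans (ciInf_le (Finite.bddBelow_range _) j₂)
        (ciInf_le (Finite.bddBelow_range _) k₂)
    rw [e1, e2, key I j₁ k₁ j₂ k₂]
    have hle : ∑ i ∈ I, (P i j₁ k₁ - P i j₂ k₂)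
        ≤ (1/2) * ∑ i, |P i j₁ k₁ - P i j₂ k₂| := by
      rw [← habs j₁ k₁ j₂ k₂]
      calc ∑ i ∈ I, (P i j₁ k₁ - P i j₂ k₂)
          ≤ ∑ i ∈ I, max (P i j₁ k₁ - P i j₂ k₂) 0 :=
            Finset.sum_le_sum fun i _ => le_max_left _ _
        _ ≤ ∑ i, max (P i j₁ k₁ - P i j₂ k₂) 0 :=
            Finset.sum_le_sum_of_subset_of_nonneg (Finset.subset_univ I)
              (fun i _ _ => le_max_right _ _)
    have hmle : ∑ i, |P i j₁ k₁ - P i j₂ k₂| ≤ m := by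
      calc ∑ i, |P i j₁ k₁ - P i j₂ k₂|
          ≤ ⨆ k₂', ∑ i, |P i j₁ k₁ - P i j₂ k₂'| :=
            le_ciSup (f := fun k₂' => ∑ i, |P i j₁ k₁ - P i j₂ k₂'|)
              (Finite.bddAbove_range _) k₂
        _ ≤ ⨆ k₁', ⨆ k₂', ∑ i, |P i j₁ k₁' - P i j₂ k₂'| :=
            le_ciSup (f := fun k₁' => ⨆ k₂', ∑ i, |P i j₁ k₁' - P i j₂ k₂'|)
              (Finite.bddAbove_range _) k₁
        _ ≤ ⨆ j₂', ⨆ k₁', ⨆ k₂', ∑ i, |P i j₁ k₁' - P i j₂' k₂'| :=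
            le_ciSup (f := fun j₂' => ⨆ k₁', ⨆ k₂', ∑ i, |P i j₁ k₁' - P i j₂' k₂'|)
              (Finite.bddAbove_range _) j₂
        _ ≤ m :=
            le_ciSup (f := fun j₁' => ⨆ j₂', ⨆ k₁', ⨆ k₂', ∑ i, |P i j₁' k₁' - P i j₂' k₂'|)
              (Finite.bddAbove_range _) j₁
    linarith
  rw [hA, hm] at dir1 dir2 ⊢
  linarith
end
end

section
/- For any stochastic tensor P ∈ ℝ^{n×n×n}, T(P) ≤ 2 − 2δ(P), where δ(P) = min_{I ⊆ [n]} ( min_{j,k} ∑_{i∉I} P_{ijk} + min_{j,k} ∑_{i∈I} P_{ijk} ). -/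
open Finset Filter Topology

noncomputable section

/-- Symmetrized tensor-vector-vector product. -/
def avec {n : ℕ} (P : Fin n → Fin n → Fin n → ℝ) (x z : Fin n → ℝ) : Fin n → ℝ :=
  fun i => ∑ j, ∑ k, (P i j k + P i k j) * x j * z k

lemma iInf2_le {n : ℕ} (g : Fin n → Fin n → ℝ) (j k : Fin n) :
    (⨅ j, ⨅ k, g j k) ≤ g j k :=
  le_trans (ciInf_le (Finite.bddBelow_range _) j) (ciInf_le (Finite.bddBelow_range _) k)

lemma abs_sub_eq_min (u v : ℝ) : |u - v| = u + v - 2 * min u v := by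
  rcases le_total u v with h | h
  · rw [abs_of_nonpos (by linarith), min_eq_left h]; ring
  · rw [abs_of_nonneg (by linarith), min_eq_right h]; ring

lemma sum_avec_eq {n : ℕ} (P : Fin n → Fin n → Fin n → ℝ) (hP : Stochastic P)
    (x z : Fin n → ℝ) (hx : ∑ j, x j = 1) (hz : ∑ k, z k = 1 / 2) :
    ∑ i, avec P x z i = 1 := by
  unfold avec
  rw [Finset.sum_comm]
  have h1 : ∀ j, ∑ i, ∑ k, (P i j k + P i k j) * x j * z k = x j := by
    intro j
    rw [Finset.sum_comm]
    have h2 : ∀ k, ∑ i, (P i j k + P i k j) * x j * z k = 2 * (x j * z k) := by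
      intro k
      rw [← Finset.sum_mul, ← Finset.sum_mul, Finset.sum_add_distrib, hP.2, hP.2]
      ring
    rw [Finset.sum_congr rfl fun k _ => h2 k, ← Finset.mul_sum, ← Finset.mul_sum, hz]
    ring
  rw [Finset.sum_congr rfl fun j _ => h1 j, hx]

lemma sum_avec_ge {n : ℕ} (P : Fin n → Fin n → Fin n → ℝ) (hP0 : ∀ i j k, 0 ≤ P i j k)
    (x z : Fin n → ℝ) (hx0 : ∀ j, 0 ≤ x j) (hz0 : ∀ k, 0 ≤ z k)
    (hx : ∑ j, x j = 1) (hz : ∑ k, z k = 1 / 2) (S : Finset (Fin n)) :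
    (⨅ j, ⨅ k, ∑ i ∈ S, P i j k) ≤ ∑ i ∈ S, avec P x z i := by
  set m := ⨅ j, ⨅ k, ∑ i ∈ S, P i j k with hm
  have hstep : ∀ j k, 2 * m * (x j * z k) ≤ ∑ i ∈ S, (P i j k + P i k j) * x j * z k := by
    intro j k
    have h1 : m ≤ ∑ i ∈ S, P i j k := iInf2_le _ j k
    have h2 : m ≤ ∑ i ∈ S, P i k j := iInf2_le _ k j
    have h3 : ∑ i ∈ S, (P i j k + P i k j) * x j * z k
        = (∑ i ∈ S, P i j k + ∑ i ∈ S, P i k j) * x j * z k := by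
      rw [← Finset.sum_mul, ← Finset.sum_mul, Finset.sum_add_distrib]
    rw [h3]
    have hxz : 0 ≤ x j * z k := mul_nonneg (hx0 j) (hz0 k)
    nlinarith [hxz]
  have hsum : ∑ i ∈ S, avec P x z i
      = ∑ j, ∑ k, ∑ i ∈ S, (P i j k + P i k j) * x j * z k := by
    unfold avec
    rw [Finset.sum_comm]
    exact Finset.sum_congr rfl fun j _ => Finset.sum_comm
  have hj : ∀ j, ∑ k, 2 * m * (x j * z k) = m * x j := by
    intro j
    rw [← Finset.mul_sum, ← Finset.mul_sum, hz]; ring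
  calc m = ∑ j, m * x j := by rw [← Finset.mul_sum, hx, mul_one]
    _ = ∑ j, ∑ k, 2 * m * (x j * z k) := Finset.sum_congr rfl fun j _ => (hj j).symm
    _ ≤ ∑ j, ∑ k, ∑ i ∈ S, (P i j k + P i k j) * x j * z k :=
        Finset.sum_le_sum fun j _ => Finset.sum_le_sum fun k _ => hstep j k
    _ = ∑ i ∈ S, avec P x z i := hsum.symm

theorem stmt16 {n : ℕ} (P : Fin n → Fin n → Fin n → ℝ) (hP : Stochastic P) :
    TT P ≤ 2 - 2 * ⨅ I : Finset (Fin n),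
      ((⨅ j, ⨅ k, ∑ i ∈ Iᶜ, P i j k) + ⨅ j, ⨅ k, ∑ i ∈ I, P i j k) := by
  set D := fun I : Finset (Fin n) =>
    ((⨅ j, ⨅ k, ∑ i ∈ Iᶜ, P i j k) + ⨅ j, ⨅ k, ∑ i ∈ I, P i j k) with hD
  have hbddD : BddBelow (Set.range D) := Finite.bddBelow_range _
  have hδ1 : (⨅ I, D I) ≤ 1 := by
    refine le_trans (ciInf_le hbddD ∅) ?_
    rw [hD]
    rcases Nat.eq_zero_or_pos n with h | h
    · subst h
      simp [Real.iInf_of_isEmpty]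
    · have : Nonempty (Fin n) := ⟨⟨0, h⟩⟩
      simp [Finset.compl_empty, hP.2, ciInf_const]
  apply Real.sSup_le
  · rintro r ⟨x, hx, y, hy, rfl⟩
    obtain ⟨hx0, hx1⟩ := hx
    obtain ⟨hy0, hy1⟩ := hy
    set yp : Fin n → ℝ := fun k => (|y k| + y k) / 2 with hyp
    set ym : Fin n → ℝ := fun k => (|y k| - y k) / 2 with hym
    have hyp0 : ∀ k, 0 ≤ yp k := fun k =>
      div_nonneg (by linarith [neg_abs_le (y k)]) (by norm_num)
    have hym0 : ∀ k, 0 ≤ ym k := fun k =>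
      div_nonneg (by linarith [le_abs_self (y k)]) (by norm_num)
    have hyps : ∑ k, yp k = 1 / 2 := by
      simp only [hyp]
      rw [← Finset.sum_div, Finset.sum_add_distrib, hy1, hy0]
      norm_num
    have hyms : ∑ k, ym k = 1 / 2 := by
      simp only [hym]
      rw [← Finset.sum_div, Finset.sum_sub_distrib, hy1, hy0]
      norm_num
    set a : Fin n → ℝ := avec P x yp with ha
    set b : Fin n → ℝ := avec P x ym with hb
    have h1 : ∀ i, tvv P x y i + tvv P y x i = a i - b i := by
      intro i
      have h2 : tvv P y x i = ∑ j, ∑ k, P i k j * y k * x j := Finset.sum_comm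
      rw [h2, ha, hb]
      simp only [tvv, avec]
      rw [← Finset.sum_sub_distrib, ← Finset.sum_add_distrib]
      refine Finset.sum_congr rfl fun j _ => ?_
      rw [← Finset.sum_sub_distrib, ← Finset.sum_add_distrib]
      refine Finset.sum_congr rfl fun k _ => ?_
      simp only [hyp, hym]
      ring
    have hsa : ∑ i, a i = 1 := sum_avec_eq P hP x yp hx1 hyps
    have hsb : ∑ i, b i = 1 := sum_avec_eq P hP x ym hx1 hyms
    set I : Finset (Fin n) := Finset.univ.filter (fun i => b i ≤ a i) with hI
    have hIb : (⨅ j, ⨅ k, ∑ i ∈ I, P i j k) ≤ ∑ i ∈ I, b i :=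
      sum_avec_ge P hP.1 x ym hx0 hym0 hx1 hyms I
    have hIca : (⨅ j, ⨅ k, ∑ i ∈ Iᶜ, P i j k) ≤ ∑ i ∈ Iᶜ, a i :=
      sum_avec_ge P hP.1 x yp hx0 hyp0 hx1 hyps Iᶜ
    have hmin : ∑ i, min (a i) (b i) = ∑ i ∈ I, b i + ∑ i ∈ Iᶜ, a i := by
      rw [← Finset.sum_add_sum_compl I (fun i => min (a i) (b i))]
      congr 1
      · refine Finset.sum_congr rfl fun i hi => min_eq_right ?_
        simpa [hI] using hi
      · refine Finset.sum_congr rfl fun i hi => min_eq_left ?_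
        have : ¬ b i ≤ a i := by simpa [hI] using hi
        linarith [lt_of_not_ge this]
    have hDle : D I ≤ ∑ i, min (a i) (b i) := by
      simp only [hD]
      rw [hmin]
      linarith [hIca, hIb]
    have hfin : (⨅ I, D I) ≤ D I := ciInf_le hbddD I
    calc ∑ i, |tvv P x y i + tvv P y x i|
        = ∑ i, (a i + b i - 2 * min (a i) (b i)) :=
          Finset.sum_congr rfl fun i _ => by rw [h1 i, abs_sub_eq_min]
      _ = 2 - 2 * ∑ i, min (a i) (b i) := by
          rw [Finset.sum_sub_distrib, Finset.sum_add_distrib, hsa, hsb, ← Finset.mul_sum]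
          ring
      _ ≤ 2 - 2 * ⨅ I, D I := by linarith
  · linarith [hδ1]
end
end

section
/- Let P be a stochastic tensor, α ∈ (0,1), v ∈ S₁, and suppose α·T(P) < 1. Then the multilinear PageRank equation x = αPxx + (1−α)v has a unique solution x ∈ S₁, the iteration x_{t+1} = αP x_t x_t + (1−α)v converges to x with rate at least αT(P), and ‖x − v‖₁ ≤ 2α. -/
open Finset Filter Topology

noncomputable section

/-! The map `F x = αPxx + (1 - α)v` sends the simplex `S₁` to itself. For `x, x' ∈ S₁` the
polarization `Pxx - Px'x' = Pmd + Pdm`, with `m = (x + x')/2 ∈ S₁` and `d = x - x'` of zero sum,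
and the homogeneity of `y ↦ Pmy + Pym` give `‖F x - F x'‖₁ ≤ αT(P) ‖x - x'‖₁`. Banach's fixed point
theorem in `ℓ¹` yields existence, uniqueness and the rate of convergence. Finally
`x - v = α(Pxx - v)`, and two points of `S₁` are at `ℓ¹` distance at most `2`. -/

section ContractionL1

variable {ι : Type*} [Fintype ι] {F : (ι → ℝ) → ι → ℝ} {s : Set (ι → ℝ)} {K : ℝ}

theorem exists_fixedPoint_of_sum_abs_sub_le (hs : IsClosed s) (hF : Set.MapsTo F s s)
    (hK0 : 0 ≤ K) (hK1 : K < 1)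
    (hFK : ∀ x ∈ s, ∀ y ∈ s, ∑ i, |F x i - F y i| ≤ K * ∑ i, |x i - y i|)
    {x₀ : ι → ℝ} (hx₀ : x₀ ∈ s) : ∃ x ∈ s, F x = x := by
  -- `ι → ℝ` carries the sup metric; the `ℓ¹` metric lives on `PiLp 1`.
  let f : PiLp 1 (fun _ : ι => ℝ) → PiLp 1 (fun _ : ι => ℝ) := fun y => WithLp.toLp 1 (F y.ofLp)
  have hsf : Set.MapsTo f (WithLp.ofLp ⁻¹' s) (WithLp.ofLp ⁻¹' s) := fun y hy => hF hy
  have hf : ContractingWith ⟨K, hK0⟩ (hsf.restrict f _ _) := by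
    refine ⟨by exact_mod_cast hK1, LipschitzWith.of_dist_le_mul fun y z => ?_⟩
    have hyz := hFK _ y.2 _ z.2
    simp only [Subtype.dist_eq, PiLp.dist_eq_of_L1, Real.dist_eq, f] at hyz ⊢
    exact hyz
  obtain ⟨y, hys, hy, -⟩ := hf.exists_fixedPoint'
    (hs.preimage (PiLp.continuous_ofLp 1 _)).isComplete hsf (x := WithLp.toLp 1 x₀) hx₀
    (edist_ne_top _ _)
  exact ⟨y.ofLp, hys, congrArg WithLp.ofLp hy⟩

theorem eq_of_sum_abs_sub_le (hK1 : K < 1)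
    (hFK : ∀ x ∈ s, ∀ y ∈ s, ∑ i, |F x i - F y i| ≤ K * ∑ i, |x i - y i|)
    {x y : ι → ℝ} (hx : x ∈ s) (hy : y ∈ s) (hFx : F x = x) (hFy : F y = y) : x = y := by
  have hd := hFK x hx y hy
  rw [hFx, hFy] at hd
  have hd0 : ∑ i, |x i - y i| = 0 :=
    le_antisymm (by nlinarith [sum_nonneg fun i (_ : i ∈ univ) => abs_nonneg (x i - y i)])
      (sum_nonneg fun i _ => abs_nonneg _)
  funext i
  rw [sum_eq_zero_iff_of_nonneg fun i _ => abs_nonneg _] at hd0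
  exact sub_eq_zero.mp (abs_eq_zero.mp (hd0 i (mem_univ i)))

theorem sum_abs_iterate_sub_le (hF : Set.MapsTo F s s) (hK0 : 0 ≤ K)
    (hFK : ∀ x ∈ s, ∀ y ∈ s, ∑ i, |F x i - F y i| ≤ K * ∑ i, |x i - y i|)
    {x : ι → ℝ} (hx : x ∈ s) (hFx : F x = x) {xs : ℕ → ι → ℝ} (hxs₀ : xs 0 ∈ s)
    (hxs : ∀ t, xs (t + 1) = F (xs t)) (t : ℕ) :
    xs t ∈ s ∧ ∑ i, |xs t i - x i| ≤ K ^ t * ∑ i, |xs 0 i - x i| := by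
  induction t with
  | zero => simp [hxs₀]
  | succ t ih =>
    refine ⟨hxs t ▸ hF ih.1, ?_⟩
    calc ∑ i, |xs (t + 1) i - x i| = ∑ i, |F (xs t) i - F x i| := by rw [hxs t, hFx]
      _ ≤ K * ∑ i, |xs t i - x i| := hFK _ ih.1 _ hx
      _ ≤ K * (K ^ t * ∑ i, |xs 0 i - x i|) := mul_le_mul_of_nonneg_left ih.2 hK0
      _ = K ^ (t + 1) * ∑ i, |xs 0 i - x i| := by ring

end ContractionL1

theorem sum_abs_sub_le_two {n : ℕ} {x y : Fin n → ℝ} (hx : x ∈ S1 n) (hy : y ∈ S1 n) :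
    ∑ i, |x i - y i| ≤ 2 :=
  calc ∑ i, |x i - y i| ≤ ∑ i, (x i + y i) :=
        sum_le_sum fun i _ => abs_sub_le_of_nonneg_of_le (hx.1 i) (le_add_of_nonneg_right (hy.1 i))
          (hy.1 i) (le_add_of_nonneg_left (hx.1 i))
    _ = 2 := by rw [sum_add_distrib, hx.2, hy.2]; norm_num

section Tensor

variable {n : ℕ} {P : Fin n → Fin n → Fin n → ℝ}

theorem tvv_smul_right (P : Fin n → Fin n → Fin n → ℝ) (c : ℝ) (x y : Fin n → ℝ) :
    tvv P x (c • y) = c • tvv P x y := by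
  ext i
  simp only [tvv, Pi.smul_apply, smul_eq_mul, mul_sum]
  exact sum_congr rfl fun j _ => sum_congr rfl fun k _ => by ring

theorem tvv_smul_left (P : Fin n → Fin n → Fin n → ℝ) (c : ℝ) (x y : Fin n → ℝ) :
    tvv P (c • x) y = c • tvv P x y := by
  ext i
  simp only [tvv, Pi.smul_apply, smul_eq_mul, mul_sum]
  exact sum_congr rfl fun j _ => sum_congr rfl fun k _ => by ring

theorem tvv_sub_tvv (P : Fin n → Fin n → Fin n → ℝ) (x x' : Fin n → ℝ) :
    tvv P x x - tvv P x' x' =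
      tvv P ((1 / 2 : ℝ) • (x + x')) (x - x') + tvv P (x - x') ((1 / 2 : ℝ) • (x + x')) := by
  ext i
  simp only [tvv, Pi.sub_apply, Pi.add_apply, Pi.smul_apply, smul_eq_mul, ← sum_sub_distrib,
    ← sum_add_distrib]
  exact sum_congr rfl fun j _ => sum_congr rfl fun k _ => by ring

theorem Stochastic.sum_tvv (hP : Stochastic P) (x y : Fin n → ℝ) :
    ∑ i, tvv P x y i = (∑ j, x j) * ∑ k, y k := by
  simp only [tvv]
  rw [sum_comm, sum_mul]
  refine sum_congr rfl fun j _ => ?_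
  rw [sum_comm, mul_sum]
  refine sum_congr rfl fun k _ => ?_
  rw [← sum_mul, ← sum_mul, hP.2 j k, one_mul]

theorem Stochastic.tvv_mem_S1 (hP : Stochastic P) {x y : Fin n → ℝ} (hx : x ∈ S1 n)
    (hy : y ∈ S1 n) : tvv P x y ∈ S1 n :=
  ⟨fun i => sum_nonneg fun j _ => sum_nonneg fun k _ =>
    mul_nonneg (mul_nonneg (hP.1 i j k) (hx.1 j)) (hy.1 k), by rw [hP.sum_tvv, hx.2, hy.2, one_mul]⟩

theorem Stochastic.sum_abs_tvv_le (hP : Stochastic P) (x y : Fin n → ℝ) :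
    ∑ i, |tvv P x y i| ≤ (∑ j, |x j|) * ∑ k, |y k| := by
  rw [← hP.sum_tvv]
  refine sum_le_sum fun i _ => (abs_sum_le_sum_abs _ _).trans <| sum_le_sum fun j _ =>
    (abs_sum_le_sum_abs _ _).trans_eq <| sum_congr rfl fun k _ => ?_
  rw [abs_mul, abs_mul, abs_of_nonneg (hP.1 i j k)]

theorem Stochastic.bddAbove_TT (hP : Stochastic P) :
    BddAbove {r | ∃ x ∈ S1 n, ∃ y ∈ Z1 n, r = ∑ i, |tvv P x y i + tvv P y x i|} := by
  refine ⟨2, ?_⟩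
  rintro _ ⟨x, hx, y, hy, rfl⟩
  have hx1 : ∑ j, |x j| = 1 := by rw [← hx.2]; exact sum_congr rfl fun j _ => abs_of_nonneg (hx.1 j)
  calc ∑ i, |tvv P x y i + tvv P y x i| ≤ ∑ i, |tvv P x y i| + ∑ i, |tvv P y x i| := by
        rw [← sum_add_distrib]; exact sum_le_sum fun i _ => abs_add_le _ _
    _ ≤ (∑ j, |x j|) * (∑ k, |y k|) + (∑ j, |y j|) * ∑ k, |x k| :=
        add_le_add (hP.sum_abs_tvv_le x y) (hP.sum_abs_tvv_le y x)
    _ = 2 := by rw [hx1, hy.2]; norm_num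

theorem TT_nonneg (P : Fin n → Fin n → Fin n → ℝ) : 0 ≤ TT P :=
  Real.sSup_nonneg <| by
    rintro _ ⟨x, -, y, -, rfl⟩
    exact sum_nonneg fun i _ => abs_nonneg _

theorem Stochastic.sum_abs_tvv_add_tvv_le (hP : Stochastic P) {x y : Fin n → ℝ} (hx : x ∈ S1 n)
    (hy : ∑ k, y k = 0) : ∑ i, |tvv P x y i + tvv P y x i| ≤ TT P * ∑ k, |y k| := by
  set c := ∑ k, |y k|
  rcases (show 0 ≤ c from sum_nonneg fun k _ => abs_nonneg (y k)).eq_or_lt with hc | hc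
  · have hy0 : y = 0 := funext fun k => abs_eq_zero.mp <|
      (sum_eq_zero_iff_of_nonneg fun k _ => abs_nonneg (y k)).mp hc.symm k (mem_univ k)
    have h0 : ∀ i, tvv P x y i + tvv P y x i = 0 := by simp [hy0, tvv]
    simp only [h0, abs_zero, sum_const_zero]
    exact mul_nonneg (TT_nonneg P) hc.le
  have hy' : c⁻¹ • y ∈ Z1 n := by
    refine ⟨by simp [← mul_sum, hy], ?_⟩
    simp only [Pi.smul_apply, smul_eq_mul, abs_mul, abs_of_pos (inv_pos.mpr hc), ← mul_sum]
    exact inv_mul_cancel₀ hc.ne'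
  have hyc : y = c • c⁻¹ • y := by rw [smul_smul, mul_inv_cancel₀ hc.ne', one_smul]
  calc ∑ i, |tvv P x y i + tvv P y x i|
      = c * ∑ i, |tvv P x (c⁻¹ • y) i + tvv P (c⁻¹ • y) x i| := by
        conv_lhs => rw [hyc, tvv_smul_right, tvv_smul_left]
        simp only [Pi.smul_apply, smul_eq_mul, ← mul_add, abs_mul, abs_of_pos hc, ← mul_sum]
    _ ≤ c * TT P := mul_le_mul_of_nonneg_left (le_csSup hP.bddAbove_TT ⟨x, hx, _, hy', rfl⟩) hc.le
    _ = TT P * c := mul_comm _ _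

end Tensor

def pageRankMap {n : ℕ} (P : Fin n → Fin n → Fin n → ℝ) (α : ℝ) (v : Fin n → ℝ) :
    (Fin n → ℝ) → Fin n → ℝ :=
  fun x i => α * tvv P x x i + (1 - α) * v i

section PageRank

variable {n : ℕ} {P : Fin n → Fin n → Fin n → ℝ} {α : ℝ} {v : Fin n → ℝ}

theorem Stochastic.mapsTo_pageRankMap (hP : Stochastic P) (hα0 : 0 ≤ α) (hα1 : α ≤ 1)
    (hv : v ∈ S1 n) : Set.MapsTo (pageRankMap P α v) (S1 n) (S1 n) := fun x hx =>
  -- `S1 n` is definitionally `stdSimplex ℝ (Fin n)`.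
  convex_stdSimplex ℝ (Fin n) (hP.tvv_mem_S1 hx hx) hv hα0 (sub_nonneg.mpr hα1) (by ring)

theorem Stochastic.sum_abs_pageRankMap_sub_le (hP : Stochastic P) (hα0 : 0 ≤ α)
    {x x' : Fin n → ℝ} (hx : x ∈ S1 n) (hx' : x' ∈ S1 n) :
    ∑ i, |pageRankMap P α v x i - pageRankMap P α v x' i| ≤ α * TT P * ∑ i, |x i - x' i| := by
  have hmid : (1 / 2 : ℝ) • (x + x') ∈ S1 n := by
    rw [smul_add]
    exact convex_stdSimplex ℝ (Fin n) hx hx' (by norm_num) (by norm_num) (by norm_num)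
  have hdiff : ∑ k, (x - x') k = 0 := by simp [sum_sub_distrib, hx.2, hx'.2]
  calc ∑ i, |pageRankMap P α v x i - pageRankMap P α v x' i|
      = α * ∑ i, |(tvv P x x - tvv P x' x') i| := by
        simp only [pageRankMap, Pi.sub_apply, ← mul_sub, add_sub_add_right_eq_sub, abs_mul,
          abs_of_nonneg hα0, mul_sum]
    _ ≤ α * (TT P * ∑ i, |(x - x') i|) := by
        rw [tvv_sub_tvv]
        exact mul_le_mul_of_nonneg_left (hP.sum_abs_tvv_add_tvv_le hmid hdiff) hα0
    _ = α * TT P * ∑ i, |x i - x' i| := by simp only [Pi.sub_apply, mul_assoc]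

theorem Stochastic.sum_abs_sub_le_of_pageRankMap_eq (hP : Stochastic P) (hα0 : 0 ≤ α)
    (hv : v ∈ S1 n) {x : Fin n → ℝ} (hx : x ∈ S1 n) (hfix : pageRankMap P α v x = x) :
    ∑ i, |x i - v i| ≤ 2 * α := by
  have hxv : ∀ i, x i - v i = α * (tvv P x x i - v i) := fun i => by
    have hxi := congrFun hfix i
    simp only [pageRankMap] at hxi
    linear_combination -hxi
  calc ∑ i, |x i - v i| = α * ∑ i, |tvv P x x i - v i| := by
        simp only [hxv, abs_mul, abs_of_nonneg hα0, mul_sum]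
    _ ≤ α * 2 := mul_le_mul_of_nonneg_left (sum_abs_sub_le_two (hP.tvv_mem_S1 hx hx) hv) hα0
    _ = 2 * α := mul_comm _ _

end PageRank

theorem stmt18 {n : ℕ} (P : Fin n → Fin n → Fin n → ℝ) (hP : Stochastic P)
    (α : ℝ) (hα0 : 0 < α) (hα1 : α < 1) (v : Fin n → ℝ) (hv : v ∈ S1 n)
    (h : α * TT P < 1) :
    ∃ x ∈ S1 n, (∀ i, x i = α * tvv P x x i + (1 - α) * v i) ∧
      (∀ x' ∈ S1 n, (∀ i, x' i = α * tvv P x' x' i + (1 - α) * v i) → x' = x) ∧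
      (∀ x0 ∈ S1 n, ∀ xs : ℕ → (Fin n → ℝ), xs 0 = x0 →
        (∀ t, xs (t + 1) = fun i => α * tvv P (xs t) (xs t) i + (1 - α) * v i) →
        ∀ t, ∑ i, |xs t i - x i| ≤ (α * TT P) ^ t * ∑ i, |x0 i - x i|) ∧
      ∑ i, |x i - v i| ≤ 2 * α := by
  have hK0 : 0 ≤ α * TT P := mul_nonneg hα0.le (TT_nonneg P)
  have hmaps := hP.mapsTo_pageRankMap hα0.le hα1.le hv
  have hcontr := fun x (hx : x ∈ S1 n) x' (hx' : x' ∈ S1 n) =>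
    hP.sum_abs_pageRankMap_sub_le (v := v) hα0.le hx hx'
  obtain ⟨x, hx, hfix⟩ :=
    exists_fixedPoint_of_sum_abs_sub_le (isClosed_stdSimplex ℝ (Fin n)) hmaps hK0 h hcontr hv
  refine ⟨x, hx, fun i => (congrFun hfix i).symm, fun x' hx' hfix' => ?_, ?_,
    hP.sum_abs_sub_le_of_pageRankMap_eq hα0.le hv hx hfix⟩
  · exact eq_of_sum_abs_sub_le h hcontr hx' hx (funext fun i => (hfix' i).symm) hfix
  · rintro x0 hx0 xs rfl hxs t
    exact (sum_abs_iterate_sub_le hmaps hK0 hcontr hx hfix hx0 hxs t).2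
end
end
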